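/- arXiv:2305.14096 — 15 statements merged into one kernel-verified Lean document; each statement's English description precedes it below -/
import Mathlib

section
/- For every monotone normalized valuation v : 2^M → ℝ≥0 on a finite set M of goods, there exists a subset T* ⊆ M such that v(T*) ≥ v(M∖T*), v(M∖T*) = MMS(v), and for every j ∈ T*, v(T*∖{j}) ≤ v(M∖T*), where MMS(v) = max_{T⊆M} min(v(T), v(M∖T)). -/
/-- The maximin share of a valuation `v` on subsets of a finite set `M`,
for two agents with equal entitlements: `MMS(v) = max_{T ⊆ M} min (v T) (v Tᶜ)`. -/
noncomputable def mms2 {M : Type*} [Fintype M] [DecidableEq M] (v : Finset M → ℝ) : ℝ :=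
  (Finset.univ : Finset (Finset M)).sup' ⟨∅, Finset.mem_univ ∅⟩ fun T => min (v T) (v Tᶜ)

/-- For every monotone normalized (nonnegative) valuation `v : 2^M → ℝ≥0` on a finite
set `M`, there exists `T* ⊆ M` with `v(T*) ≥ v(M∖T*)`, `v(M∖T*) = MMS(v)`, and
`v(T*∖{j}) ≤ v(M∖T*)` for every `j ∈ T*`. -/
theorem exists_mms_efx_cut {M : Type*} [Fintype M] [DecidableEq M]
    (v : Finset M → ℝ)
    (hmono : ∀ T T' : Finset M, T ⊆ T' → v T ≤ v T')
    (hnorm : v ∅ = 0)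
    (hnonneg : ∀ T : Finset M, 0 ≤ v T) :
    ∃ Tstar : Finset M,
      v Tstarᶜ ≤ v Tstar ∧
      v Tstarᶜ = mms2 v ∧
      ∀ j ∈ Tstar, v (Tstar \ {j}) ≤ v Tstarᶜ := by
  classical
  set m := mms2 v with hm
  have hle : ∀ T : Finset M, min (v T) (v Tᶜ) ≤ m := fun T => by
    rw [hm, mms2]; exact Finset.le_sup' (fun T => min (v T) (v Tᶜ)) (Finset.mem_univ T)
  obtain ⟨T0, -, hT0⟩ := Finset.exists_mem_eq_sup' (α := ℝ)
    (⟨∅, Finset.mem_univ ∅⟩ : (Finset.univ : Finset (Finset M)).Nonempty)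
    (fun T => min (v T) (v Tᶜ))
  have hmT0 : m = min (v T0) (v T0ᶜ) := hT0
  set S : Finset (Finset M) := Finset.univ.filter (fun T => v Tᶜ ≤ v T ∧ v Tᶜ = m) with hS
  have hSne : S.Nonempty := by
    rcases le_total (v T0ᶜ) (v T0) with h | h
    · exact ⟨T0, Finset.mem_filter.2 ⟨Finset.mem_univ _, h,
        by rw [hmT0, min_eq_right h]⟩⟩
    · refine ⟨T0ᶜ, Finset.mem_filter.2 ⟨Finset.mem_univ _, ?_⟩⟩
      rw [compl_compl]
      exact ⟨h, by rw [hmT0, min_eq_left h]⟩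
  obtain ⟨T, hTmem, hTmin⟩ := S.exists_min_image Finset.card hSne
  simp only [hS, Finset.mem_filter, Finset.mem_univ, true_and] at hTmem
  refine ⟨T, hTmem.1, hTmem.2, ?_⟩
  intro j hj
  by_contra hcon
  push_neg at hcon
  set T' := T \ {j} with hT'
  have hsub : T' ⊆ T := Finset.sdiff_subset
  have hcsub : Tᶜ ⊆ T'ᶜ := Finset.compl_subset_compl.2 hsub
  have h1 : m ≤ v T'ᶜ := by
    rw [← hTmem.2]; exact hmono _ _ hcsub
  have h2 : v T'ᶜ ≤ v T' := by
    by_contra h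
    push_neg at h
    have := hle T'
    rw [min_eq_left h.le] at this
    exact absurd (lt_of_le_of_lt this (hTmem.2 ▸ hcon)) (lt_irrefl _)
  have h3 : v T'ᶜ = m := le_antisymm (by
    have := hle T'
    rwa [min_eq_right h2] at this) h1
  have hT'S : T' ∈ S := Finset.mem_filter.2 ⟨Finset.mem_univ _, h2, h3⟩
  have hcard : T.card ≤ T'.card := hTmin _ hT'S
  have : T'.card < T.card := Finset.card_lt_card (Finset.sdiff_ssubset (by simpa using hj) (Finset.singleton_nonempty j))
  omega
end

section
/- For the IDV Cut-&-Choose mechanism and every true signal vector s = (s₁,s₂) ∈ S₁×S₂, the report vector ((s₁,s₂),(s₂,s₁)) (each agent reports her own signal truthfully and guesses the other's signal correctly) is a pure Nash equilibrium. -/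
open scoped Classical

/-- The chooser's selection in the IDV Cut-&-Choose mechanism: given agent 1's report
`(r1, b1)` (inducing the cut `(Tstar r1 b1, (Tstar r1 b1)ᶜ)`) and agent 2's report
`(r2, b2)`, agent 2 selects the better of the two parts according to `v2 (b2, r2)`,
taking `Tstar r1 b1` in case of a tie.  The mechanism outputs the allocation
`(A₁, A₂)` with `A₂ = chooseSet v2 Tstar r1 b1 r2 b2` and `A₁ = A₂ᶜ`. -/
noncomputable def chooseSet {M S1 S2 : Type*} [Fintype M] [DecidableEq M]
    (v2 : S1 × S2 → Finset M → ℝ) (Tstar : S1 → S2 → Finset M)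
    (r1 : S1) (b1 : S2) (r2 : S2) (b2 : S1) : Finset M :=
  if v2 (b2, r2) ((Tstar r1 b1)ᶜ) ≤ v2 (b2, r2) (Tstar r1 b1) then Tstar r1 b1
  else (Tstar r1 b1)ᶜ

/-- For the IDV Cut-&-Choose mechanism and every true signal vector `s = (s₁, s₂)`,
the report vector `((s₁,s₂),(s₂,s₁))` is a pure Nash equilibrium: neither agent can
strictly improve her perceived value by a unilateral deviation. -/
theorem cutChoose_truthful_is_PNE
    {M S1 S2 : Type*} [Fintype M] [DecidableEq M] [Nonempty S1] [Nonempty S2]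
    (v1 v2 : S1 × S2 → Finset M → ℝ)
    (h1mono : ∀ (σ : S1 × S2) (T T' : Finset M), T ⊆ T' → v1 σ T ≤ v1 σ T')
    (h1norm : ∀ σ : S1 × S2, v1 σ ∅ = 0)
    (h1nonneg : ∀ (σ : S1 × S2) (T : Finset M), 0 ≤ v1 σ T)
    (h2mono : ∀ (σ : S1 × S2) (T T' : Finset M), T ⊆ T' → v2 σ T ≤ v2 σ T')
    (h2norm : ∀ σ : S1 × S2, v2 σ ∅ = 0)
    (h2nonneg : ∀ (σ : S1 × S2) (T : Finset M), 0 ≤ v2 σ T)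
    -- `Tstar r1 b1` is the cutter's cut, as prescribed by the IDV Cut-&-Choose mechanism.
    -- If branch: `ξ₁(r1,b1) > MMS₁(r1,b1)`, i.e. some `T ∈ 𝒯(r1,b1)` has
    -- `v1 (r1,b1) Tᶜ > MMS₁(r1,b1)`; then `Tstar r1 b1 ∈ 𝒯(r1,b1)` attains
    -- `ξ₁(r1,b1) = max_{T ∈ 𝒯(r1,b1)} v1 (r1,b1) Tᶜ`.
    (Tstar : S1 → S2 → Finset M)
    (hTstarIf : ∀ (r1 : S1) (b1 : S2),
      (∃ T : Finset M, v2 (r1, b1) Tᶜ ≤ v2 (r1, b1) T ∧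
          mms2 (v1 (r1, b1)) < v1 (r1, b1) Tᶜ) →
        v2 (r1, b1) ((Tstar r1 b1)ᶜ) ≤ v2 (r1, b1) (Tstar r1 b1) ∧
        ∀ T : Finset M, v2 (r1, b1) Tᶜ ≤ v2 (r1, b1) T →
          v1 (r1, b1) Tᶜ ≤ v1 (r1, b1) ((Tstar r1 b1)ᶜ))
    -- Else branch: `Tstar r1 b1` is the set provided by Plaut–Roughgarden for
    -- `v1 (r1, b1)`: `v1 T* ≥ v1 T*ᶜ = MMS₁(r1,b1)` and removing any single good
    -- from `T*` brings its value to at most `v1 T*ᶜ`.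
    (hTstarElse : ∀ (r1 : S1) (b1 : S2),
      ¬ (∃ T : Finset M, v2 (r1, b1) Tᶜ ≤ v2 (r1, b1) T ∧
          mms2 (v1 (r1, b1)) < v1 (r1, b1) Tᶜ) →
        v1 (r1, b1) ((Tstar r1 b1)ᶜ) ≤ v1 (r1, b1) (Tstar r1 b1) ∧
        v1 (r1, b1) ((Tstar r1 b1)ᶜ) = mms2 (v1 (r1, b1)) ∧
        ∀ j ∈ Tstar r1 b1,
          v1 (r1, b1) (Tstar r1 b1 \ {j}) ≤ v1 (r1, b1) ((Tstar r1 b1)ᶜ))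
    (s1 : S1) (s2 : S2)
    :
    (∀ (r1' : S1) (b1' : S2),
        v1 (s1, s2) ((chooseSet v2 Tstar r1' b1' s2 s1)ᶜ) ≤
          v1 (s1, s2) ((chooseSet v2 Tstar s1 s2 s2 s1)ᶜ)) ∧
    (∀ (r2' : S2) (b2' : S1),
        v2 (s1, s2) (chooseSet v2 Tstar s1 s2 r2' b2') ≤
          v2 (s1, s2) (chooseSet v2 Tstar s1 s2 s2 s1)) := by
  have key : ∀ (r1' : S1) (b1' : S2),
      v2 (s1, s2) ((chooseSet v2 Tstar r1' b1' s2 s1)ᶜ) ≤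
        v2 (s1, s2) (chooseSet v2 Tstar r1' b1' s2 s1) := by
    intro r1' b1'
    unfold chooseSet
    split_ifs with h
    · exact h
    · simpa using (not_le.mp h).le
  constructor
  · intro r1' b1'
    by_cases hC : ∃ T : Finset M, v2 (s1, s2) Tᶜ ≤ v2 (s1, s2) T ∧
        mms2 (v1 (s1, s2)) < v1 (s1, s2) Tᶜ
    · obtain ⟨h2star, hmax⟩ := hTstarIf s1 s2 hC
      have htrue : chooseSet v2 Tstar s1 s2 s2 s1 = Tstar s1 s2 := by
        unfold chooseSet; exact if_pos h2star
      rw [htrue]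
      exact hmax _ (key r1' b1')
    · obtain ⟨hge, heq, _⟩ := hTstarElse s1 s2 hC
      push_neg at hC
      have hdev : v1 (s1, s2) ((chooseSet v2 Tstar r1' b1' s2 s1)ᶜ) ≤ mms2 (v1 (s1, s2)) :=
        hC _ (key r1' b1')
      have htrue : mms2 (v1 (s1, s2)) ≤
          v1 (s1, s2) ((chooseSet v2 Tstar s1 s2 s2 s1)ᶜ) := by
        unfold chooseSet
        split_ifs with h
        · exact heq.ge
        · rw [compl_compl]; exact heq.symm.trans_le hge
      exact hdev.trans htrue
  · intro r2' b2'
    unfold chooseSet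
    split_ifs with h1 h2 h2
    · exact le_refl _
    · exact (not_le.mp h2).le
    · exact h2
    · exact le_refl _
end

section
/- For the IDV Cut-&-Choose mechanism and every true signal vector s = (s₁,s₂), in the pure Nash equilibrium ((s₁,s₂),(s₂,s₁)) the cutter (agent 1) receives a bundle A₁ with v₁(s,A₁) ≥ max_{T⊆M} min(v₁(s,T), v₁(s,M∖T)) (her MMS with respect to s), and moreover the resulting allocation (A₁,A₂) is EFX for the cutter with respect to s, i.e., v₁(s,A₁) ≥ v₁(s,A₂∖{j}) for every j ∈ A₂. -/
open scoped Classical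

/-- In the PNE `((s₁,s₂),(s₂,s₁))` of the IDV Cut-&-Choose mechanism, the cutter
(agent 1), whose bundle is `A₁ = A₂ᶜ`, receives at least her maximin share with
respect to the true signal vector `s = (s₁,s₂)`, and the resulting allocation is
EFX for the cutter with respect to `s`. -/
theorem cutChoose_cutter_MMS_and_EFX
    {M S1 S2 : Type*} [Fintype M] [DecidableEq M] [Nonempty S1] [Nonempty S2]
    (v1 v2 : S1 × S2 → Finset M → ℝ)
    (h1mono : ∀ (σ : S1 × S2) (T T' : Finset M), T ⊆ T' → v1 σ T ≤ v1 σ T')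
    (h1norm : ∀ σ : S1 × S2, v1 σ ∅ = 0)
    (h1nonneg : ∀ (σ : S1 × S2) (T : Finset M), 0 ≤ v1 σ T)
    (h2mono : ∀ (σ : S1 × S2) (T T' : Finset M), T ⊆ T' → v2 σ T ≤ v2 σ T')
    (h2norm : ∀ σ : S1 × S2, v2 σ ∅ = 0)
    (h2nonneg : ∀ (σ : S1 × S2) (T : Finset M), 0 ≤ v2 σ T)
    -- `Tstar r1 b1` is the cutter's cut, as prescribed by the IDV Cut-&-Choose mechanism.
    -- If branch: `ξ₁(r1,b1) > MMS₁(r1,b1)`, i.e. some `T ∈ 𝒯(r1,b1)` has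
    -- `v1 (r1,b1) Tᶜ > MMS₁(r1,b1)`; then `Tstar r1 b1 ∈ 𝒯(r1,b1)` attains
    -- `ξ₁(r1,b1) = max_{T ∈ 𝒯(r1,b1)} v1 (r1,b1) Tᶜ`.
    (Tstar : S1 → S2 → Finset M)
    (hTstarIf : ∀ (r1 : S1) (b1 : S2),
      (∃ T : Finset M, v2 (r1, b1) Tᶜ ≤ v2 (r1, b1) T ∧
          mms2 (v1 (r1, b1)) < v1 (r1, b1) Tᶜ) →
        v2 (r1, b1) ((Tstar r1 b1)ᶜ) ≤ v2 (r1, b1) (Tstar r1 b1) ∧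
        ∀ T : Finset M, v2 (r1, b1) Tᶜ ≤ v2 (r1, b1) T →
          v1 (r1, b1) Tᶜ ≤ v1 (r1, b1) ((Tstar r1 b1)ᶜ))
    -- Else branch: `Tstar r1 b1` is the set provided by Plaut–Roughgarden for
    -- `v1 (r1, b1)`: `v1 T* ≥ v1 T*ᶜ = MMS₁(r1,b1)` and removing any single good
    -- from `T*` brings its value to at most `v1 T*ᶜ`.
    (hTstarElse : ∀ (r1 : S1) (b1 : S2),
      ¬ (∃ T : Finset M, v2 (r1, b1) Tᶜ ≤ v2 (r1, b1) T ∧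
          mms2 (v1 (r1, b1)) < v1 (r1, b1) Tᶜ) →
        v1 (r1, b1) ((Tstar r1 b1)ᶜ) ≤ v1 (r1, b1) (Tstar r1 b1) ∧
        v1 (r1, b1) ((Tstar r1 b1)ᶜ) = mms2 (v1 (r1, b1)) ∧
        ∀ j ∈ Tstar r1 b1,
          v1 (r1, b1) (Tstar r1 b1 \ {j}) ≤ v1 (r1, b1) ((Tstar r1 b1)ᶜ))
    (s1 : S1) (s2 : S2)
    :
    mms2 (v1 (s1, s2)) ≤ v1 (s1, s2) ((chooseSet v2 Tstar s1 s2 s2 s1)ᶜ) ∧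
    ∀ j ∈ chooseSet v2 Tstar s1 s2 s2 s1,
      v1 (s1, s2) (chooseSet v2 Tstar s1 s2 s2 s1 \ {j}) ≤
        v1 (s1, s2) ((chooseSet v2 Tstar s1 s2 s2 s1)ᶜ) := by
  have hmms_le : ∀ T : Finset M,
      min (v1 (s1, s2) T) (v1 (s1, s2) Tᶜ) ≤ mms2 (v1 (s1, s2)) := fun T =>
    Finset.le_sup' (fun T => min (v1 (s1, s2) T) (v1 (s1, s2) Tᶜ)) (Finset.mem_univ T)
  by_cases hI : ∃ T : Finset M, v2 (s1, s2) Tᶜ ≤ v2 (s1, s2) T ∧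
      mms2 (v1 (s1, s2)) < v1 (s1, s2) Tᶜ
  · obtain ⟨hch, hmax⟩ := hTstarIf s1 s2 hI
    obtain ⟨T, hT2, hTm⟩ := hI
    have hchoose : chooseSet v2 Tstar s1 s2 s2 s1 = Tstar s1 s2 := by
      simp [chooseSet, hch]
    rw [hchoose]
    have hgt : mms2 (v1 (s1, s2)) < v1 (s1, s2) ((Tstar s1 s2)ᶜ) :=
      lt_of_lt_of_le hTm (hmax T hT2)
    refine ⟨le_of_lt hgt, fun j hj => ?_⟩
    have hsub : (Tstar s1 s2)ᶜ ⊆ (Tstar s1 s2 \ {j})ᶜ :=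
      Finset.compl_subset_compl.mpr (Finset.sdiff_subset)
    have h2 : v1 (s1, s2) ((Tstar s1 s2)ᶜ) ≤ v1 (s1, s2) ((Tstar s1 s2 \ {j})ᶜ) :=
      h1mono _ _ _ hsub
    have := hmms_le (Tstar s1 s2 \ {j})
    have hmin : min (v1 (s1, s2) (Tstar s1 s2 \ {j})) (v1 (s1, s2) ((Tstar s1 s2 \ {j})ᶜ))
        = v1 (s1, s2) (Tstar s1 s2 \ {j}) := by
      rcases min_cases (v1 (s1, s2) (Tstar s1 s2 \ {j}))
          (v1 (s1, s2) ((Tstar s1 s2 \ {j})ᶜ)) with h | h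
      · exact h.1
      · exfalso; linarith [h.1]
    rw [hmin] at this
    linarith
  · obtain ⟨hge, heq, hefx⟩ := hTstarElse s1 s2 hI
    by_cases hch : v2 (s1, s2) ((Tstar s1 s2)ᶜ) ≤ v2 (s1, s2) (Tstar s1 s2)
    · have hchoose : chooseSet v2 Tstar s1 s2 s2 s1 = Tstar s1 s2 := by
        simp [chooseSet, hch]
      rw [hchoose]
      exact ⟨le_of_eq heq.symm, hefx⟩
    · have hchoose : chooseSet v2 Tstar s1 s2 s2 s1 = (Tstar s1 s2)ᶜ := by
        simp [chooseSet, hch]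
      rw [hchoose, compl_compl]
      constructor
      · calc mms2 (v1 (s1, s2)) = v1 (s1, s2) ((Tstar s1 s2)ᶜ) := heq.symm
          _ ≤ v1 (s1, s2) (Tstar s1 s2) := hge
      · intro j hj
        calc v1 (s1, s2) ((Tstar s1 s2)ᶜ \ {j})
            ≤ v1 (s1, s2) ((Tstar s1 s2)ᶜ) := h1mono _ _ _ Finset.sdiff_subset
          _ ≤ v1 (s1, s2) (Tstar s1 s2) := hge
end

section
/- For every finite set M and monotone normalized valuations v₁, v₂ : 2^M → ℝ≥0, there exists a partition (A₁,A₂) of M such that: v₁(A₁) ≥ max_{T⊆M} min(v₁(T), v₁(M∖T)) (agent 1 gets her MMS); v₁(A₁) ≥ v₁(A₂∖{j}) for every j ∈ A₂ (EFX for agent 1); and v₂(A₂) ≥ v₂(A₁) (EF for agent 2). -/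
/-- For every finite set `M` and monotone normalized (nonnegative) valuations
`v₁, v₂ : 2^M → ℝ≥0`, there exists a partition `(A₁, A₂)` of `M` (here `A₂ = A₁ᶜ`)
such that agent 1 gets at least her MMS, the partition is EFX for agent 1, and
EF for agent 2. -/
theorem exists_MMS_EFX_EF_partition {M : Type*} [Fintype M] [DecidableEq M]
    (v1 v2 : Finset M → ℝ)
    (h1mono : ∀ T T' : Finset M, T ⊆ T' → v1 T ≤ v1 T')
    (h1norm : v1 ∅ = 0)
    (h1nonneg : ∀ T : Finset M, 0 ≤ v1 T)
    (h2mono : ∀ T T' : Finset M, T ⊆ T' → v2 T ≤ v2 T')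
    (h2norm : v2 ∅ = 0)
    (h2nonneg : ∀ T : Finset M, 0 ≤ v2 T) :
    ∃ A1 : Finset M,
      mms2 v1 ≤ v1 A1 ∧
      (∀ j ∈ A1ᶜ, v1 (A1ᶜ \ {j}) ≤ v1 A1) ∧
      v2 A1 ≤ v2 A1ᶜ := by
  classical
  set F : Finset (Finset M) := Finset.univ.filter (fun A => v2 A ≤ v2 Aᶜ) with hF
  have hmemF : ∀ A : Finset M, A ∈ F ↔ v2 A ≤ v2 Aᶜ := by
    intro A; simp [hF]
  have hFne : F.Nonempty := ⟨∅, by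
    rw [hmemF]; rw [h2norm]; exact h2nonneg _⟩
  obtain ⟨A, hAF, hAmax⟩ := F.exists_max_image v1 hFne
  set F' : Finset (Finset M) := F.filter (fun B => v1 A ≤ v1 B) with hF'
  have hF'ne : F'.Nonempty := ⟨A, by simp [hF', hAF]⟩
  obtain ⟨A1, hA1F', hA1max⟩ := F'.exists_max_image (fun B => B.card) hF'ne
  have hA1F : A1 ∈ F := (Finset.mem_filter.mp hA1F').1
  have hA1v : v1 A ≤ v1 A1 := (Finset.mem_filter.mp hA1F').2
  have hEF : v2 A1 ≤ v2 A1ᶜ := (hmemF A1).mp hA1F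
  have hmaxall : ∀ B ∈ F, v1 B ≤ v1 A1 := fun B hB => (hAmax B hB).trans hA1v
  refine ⟨A1, ?_, ?_, hEF⟩
  · -- MMS
    apply Finset.sup'_le
    intro T _
    by_cases h : v2 T ≤ v2 Tᶜ
    · exact (min_le_left _ _).trans (hmaxall T ((hmemF T).mpr h))
    · have : Tᶜ ∈ F := (hmemF Tᶜ).mpr (by rw [compl_compl]; exact (not_le.mp h).le)
      exact (min_le_right _ _).trans (hmaxall Tᶜ this)
  · -- EFX
    intro j hj
    by_contra hlt
    push_neg at hlt
    have hcompl : (insert j A1)ᶜ = A1ᶜ \ {j} := by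
      ext x; simp [Finset.mem_compl, Finset.mem_sdiff, Finset.mem_insert, or_comm]
      tauto
    have hcompl2 : (A1ᶜ \ {j})ᶜ = insert j A1 := by
      rw [← hcompl, compl_compl]
    by_cases h2 : v2 (insert j A1) ≤ v2 (A1ᶜ \ {j})
    · -- insert j A1 is feasible with same-or-more v1 and more cardinality
      have hmem : insert j A1 ∈ F := (hmemF _).mpr (by rw [hcompl]; exact h2)
      have hmem' : insert j A1 ∈ F' := by
        rw [hF', Finset.mem_filter]
        exact ⟨hmem, hA1v.trans (h1mono _ _ (Finset.subset_insert _ _))⟩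
      have hjA1 : j ∉ A1 := Finset.mem_compl.mp hj
      simpa [Finset.card_insert_of_notMem hjA1] using hA1max _ hmem'
    · -- A1ᶜ \ {j} is feasible with strictly larger v1
      have hmem : A1ᶜ \ {j} ∈ F := (hmemF _).mpr (by rw [hcompl2]; exact (not_le.mp h2).le)
      exact absurd (hmaxall _ hmem) (not_le.mpr hlt)
end

section
/- There exist a set M of four goods and monotone normalized XOS valuations v₁, v₂ : 2^M → ℝ≥0 such that MMS(v₁) = MMS(v₂) = 2, yet no partition (A₁,A₂) of M satisfies both v₁(A₁) ≥ 2 and v₂(A₂) ≥ 2; concretely, for M = {a,b,c,d} one may take v₁(T) = max(1[{a,b}∩T≠∅] + 1[{a,b}⊆T], 1[{c,d}∩T≠∅] + 1[{c,d}⊆T]) and v₂(T) = max(1[{a,d}∩T≠∅] + 1[{a,d}⊆T], 1[{b,c}∩T≠∅] + 1[{b,c}⊆T]). -/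
/-- A valuation `v : 2^M → ℝ` is XOS if it is the pointwise maximum of finitely many
(at least one) nonnegative additive functions. -/
def IsXOS {M : Type*} [Fintype M] (v : Finset M → ℝ) : Prop :=
  ∃ (l : ℕ) (a : Fin (l + 1) → M → ℝ),
    (∀ k j, 0 ≤ a k j) ∧
    ∀ T : Finset M, v T = Finset.univ.sup' Finset.univ_nonempty fun k => ∑ j ∈ T, a k j

/-- `pairVal P T = 1[P ∩ T ≠ ∅] + 1[P ⊆ T]`. -/
noncomputable def pairVal (P T : Finset (Fin 4)) : ℝ :=
  (if (P ∩ T).Nonempty then 1 else 0) + (if P ⊆ T then 1 else 0)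

/-- With goods `M = {a,b,c,d} = {0,1,2,3}`:
`v₁(T) = max(1[{a,b}∩T≠∅] + 1[{a,b}⊆T], 1[{c,d}∩T≠∅] + 1[{c,d}⊆T])`. -/
noncomputable def vEx1 (T : Finset (Fin 4)) : ℝ :=
  max (pairVal {0, 1} T) (pairVal {2, 3} T)

/-- `v₂(T) = max(1[{a,d}∩T≠∅] + 1[{a,d}⊆T], 1[{b,c}∩T≠∅] + 1[{b,c}⊆T])`. -/
noncomputable def vEx2 (T : Finset (Fin 4)) : ℝ :=
  max (pairVal {0, 3} T) (pairVal {1, 2} T)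

lemma pairVal_mono {P T T' : Finset (Fin 4)} (h : T ⊆ T') : pairVal P T ≤ pairVal P T' := by
  unfold pairVal
  gcongr <;> split_ifs with h1 h2 <;> try norm_num
  · exact absurd (h1.mono (Finset.inter_subset_inter le_rfl h)) h2
  · exact absurd (h1.trans h) h2

lemma pairVal_le_two (P T : Finset (Fin 4)) : pairVal P T ≤ 2 := by
  unfold pairVal; split_ifs <;> norm_num

lemma pairVal_card {x y : Fin 4} (hxy : x ≠ y) (T : Finset (Fin 4)) :
    pairVal {x, y} T = (({x, y} ∩ T).card : ℝ) := by
  by_cases hx : x ∈ T <;> by_cases hy : y ∈ T <;>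
    simp [pairVal, Finset.insert_inter_of_mem, Finset.insert_inter_of_notMem,
      Finset.singleton_inter_of_mem, Finset.singleton_inter_of_notMem,
      Finset.insert_subset_iff, hx, hy, Finset.card_insert_of_notMem, hxy] <;>
    norm_num

lemma sup2 (f : Fin 2 → ℝ) :
    (Finset.univ : Finset (Fin 2)).sup' Finset.univ_nonempty f = max (f 0) (f 1) := by
  have : (Finset.univ : Finset (Fin 2)) = {0, 1} := by decide
  simp [this]

lemma sum_ind (P T : Finset (Fin 4)) :
    ∑ j ∈ T, (if j ∈ P then (1:ℝ) else 0) = ((P ∩ T).card : ℝ) := by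
  rw [Finset.sum_ite_mem, Finset.inter_comm]
  simp

lemma xos_of_pairs {x y z w : Fin 4} (hxy : x ≠ y) (hzw : z ≠ w) :
    IsXOS (fun T => max (pairVal {x, y} T) (pairVal {z, w} T)) := by
  refine ⟨1, fun k j => if k = 0 then (if j ∈ ({x, y} : Finset (Fin 4)) then 1 else 0)
      else (if j ∈ ({z, w} : Finset (Fin 4)) then 1 else 0), ?_, ?_⟩
  · intro k j; dsimp only; split_ifs <;> norm_num
  · intro T
    rw [sup2]
    show max (pairVal {x, y} T) (pairVal {z, w} T) = _
    rw [pairVal_card hxy, pairVal_card hzw]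
    norm_num
    rw [show (Finset.filter (fun b => b = x ∨ b = y) T) = {x, y} ∩ T from by
        ext a; simp [and_comm],
      show (Finset.filter (fun b => b = z ∨ b = w) T) = {z, w} ∩ T from by
        ext a; simp [and_comm]]

lemma pairVal_two_subset {P T : Finset (Fin 4)} (h : (2:ℝ) ≤ pairVal P T) : P ⊆ T := by
  by_contra hc
  have : pairVal P T ≤ 1 := by
    unfold pairVal; rw [if_neg hc]; split_ifs <;> norm_num
  linarith

lemma vEx_le_two (T : Finset (Fin 4)) : vEx1 T ≤ 2 ∧ vEx2 T ≤ 2 := by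
  constructor <;> exact max_le (pairVal_le_two _ _) (pairVal_le_two _ _)

lemma mms2_eq_two_of (v : Finset (Fin 4) → ℝ) (hle : ∀ T, v T ≤ 2)
    (S : Finset (Fin 4)) (h1 : v S = 2) (h2 : v Sᶜ = 2) : mms2 v = 2 := by
  apply le_antisymm
  · apply Finset.sup'_le
    intro T _
    exact le_trans (min_le_left _ _) (hle T)
  · have := Finset.le_sup' (fun T => min (v T) (v Tᶜ)) (Finset.mem_univ S)
    rw [show min (v S) (v Sᶜ) = 2 by rw [h1, h2]; simp] at this
    exact this

/-- There exist four goods and monotone normalized XOS valuations `v₁, v₂` with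
`MMS(v₁) = MMS(v₂) = 2`, yet no partition `(A₁, A₂)` (here `A₂ = A₁ᶜ`) satisfies both
`v₁(A₁) ≥ 2` and `v₂(A₂) ≥ 2`; concretely, `vEx1` and `vEx2` above witness this. -/
theorem no_MMS_partition_for_XOS_example :
    (∀ T T' : Finset (Fin 4), T ⊆ T' → vEx1 T ≤ vEx1 T') ∧
    (∀ T T' : Finset (Fin 4), T ⊆ T' → vEx2 T ≤ vEx2 T') ∧
    vEx1 ∅ = 0 ∧ vEx2 ∅ = 0 ∧
    IsXOS vEx1 ∧ IsXOS vEx2 ∧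
    mms2 vEx1 = 2 ∧ mms2 vEx2 = 2 ∧
    ∀ A1 : Finset (Fin 4), ¬ ((2 : ℝ) ≤ vEx1 A1 ∧ (2 : ℝ) ≤ vEx2 A1ᶜ) := by
  have hcard1 : ∀ T, vEx1 T = max ((({0,1} : Finset (Fin 4)) ∩ T).card : ℝ)
      ((({2,3} : Finset (Fin 4)) ∩ T).card : ℝ) := fun T => by
    rw [vEx1, pairVal_card (by decide), pairVal_card (by decide)]
  have hcard2 : ∀ T, vEx2 T = max ((({0,3} : Finset (Fin 4)) ∩ T).card : ℝ)
      ((({1,2} : Finset (Fin 4)) ∩ T).card : ℝ) := fun T => by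
    rw [vEx2, pairVal_card (by decide), pairVal_card (by decide)]
  refine ⟨fun T T' h => max_le_max (pairVal_mono h) (pairVal_mono h),
    fun T T' h => max_le_max (pairVal_mono h) (pairVal_mono h), ?_, ?_,
    xos_of_pairs (by decide) (by decide), xos_of_pairs (by decide) (by decide), ?_, ?_, ?_⟩
  · rw [hcard1]; norm_num
  · rw [hcard2]; norm_num
  · apply mms2_eq_two_of vEx1 (fun T => (vEx_le_two T).1) {0, 1} <;>
    · rw [hcard1]
      norm_num [show ({0,1} : Finset (Fin 4))ᶜ = {2,3} from by decide,
        show (({0,1} : Finset (Fin 4)) ∩ {0,1}).card = 2 from by decide,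
        show (({2,3} : Finset (Fin 4)) ∩ {0,1}).card = 0 from by decide,
        show (({0,1} : Finset (Fin 4)) ∩ {2,3}).card = 0 from by decide,
        show (({2,3} : Finset (Fin 4)) ∩ {2,3}).card = 2 from by decide,
        show ({0,1} : Finset (Fin 4)).card = 2 from by decide,
        show ({2,3} : Finset (Fin 4)).card = 2 from by decide]
  · apply mms2_eq_two_of vEx2 (fun T => (vEx_le_two T).2) {0, 3} <;>
    · rw [hcard2]
      norm_num [show ({0,3} : Finset (Fin 4))ᶜ = {1,2} from by decide,
        show (({0,3} : Finset (Fin 4)) ∩ {0,3}).card = 2 from by decide,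
        show (({1,2} : Finset (Fin 4)) ∩ {0,3}).card = 0 from by decide,
        show (({0,3} : Finset (Fin 4)) ∩ {1,2}).card = 0 from by decide,
        show (({1,2} : Finset (Fin 4)) ∩ {1,2}).card = 2 from by decide,
        show ({0,3} : Finset (Fin 4)).card = 2 from by decide,
        show ({1,2} : Finset (Fin 4)).card = 2 from by decide]
  · rintro A1 ⟨h1, h2⟩
    have h1' : ({0,1} : Finset (Fin 4)) ⊆ A1 ∨ ({2,3} : Finset (Fin 4)) ⊆ A1 := by
      rcases le_max_iff.mp h1 with h | h
      · exact Or.inl (pairVal_two_subset h)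
      · exact Or.inr (pairVal_two_subset h)
    have h2' : ({0,3} : Finset (Fin 4)) ⊆ A1ᶜ ∨ ({1,2} : Finset (Fin 4)) ⊆ A1ᶜ := by
      rcases le_max_iff.mp h2 with h | h
      · exact Or.inl (pairVal_two_subset h)
      · exact Or.inr (pairVal_two_subset h)
    rcases h1' with h1' | h1' <;> rcases h2' with h2' | h2'
    · exact absurd (h1' (by decide : (0:Fin 4) ∈ ({0,1} : Finset (Fin 4))))
        (Finset.mem_compl.mp (h2' (by decide : (0:Fin 4) ∈ ({0,3} : Finset (Fin 4)))))
    · exact absurd (h1' (by decide : (1:Fin 4) ∈ ({0,1} : Finset (Fin 4))))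
        (Finset.mem_compl.mp (h2' (by decide : (1:Fin 4) ∈ ({1,2} : Finset (Fin 4)))))
    · exact absurd (h1' (by decide : (3:Fin 4) ∈ ({2,3} : Finset (Fin 4))))
        (Finset.mem_compl.mp (h2' (by decide : (3:Fin 4) ∈ ({0,3} : Finset (Fin 4)))))
    · exact absurd (h1' (by decide : (2:Fin 4) ∈ ({2,3} : Finset (Fin 4))))
        (Finset.mem_compl.mp (h2' (by decide : (2:Fin 4) ∈ ({1,2} : Finset (Fin 4)))))
end

section
/- For the IDV Cut-&-Choose mechanism and every true signal vector s = (s₁,s₂), if the chooser's valuation v₂(s,·) is subadditive, then in the equilibrium ((s₁,s₂),(s₂,s₁)) the chooser's bundle A₂ satisfies v₂(s,A₂) ≥ v₂(s,M)/2, i.e., the allocation is proportional for the chooser with respect to s. -/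
open scoped Classical

/-- In the equilibrium `((s₁,s₂),(s₂,s₁))` of the IDV Cut-&-Choose mechanism, if the
chooser's valuation `v2 (s₁,s₂)` is subadditive, then the chooser's bundle `A₂`
satisfies `v₂(s,A₂) ≥ v₂(s,M)/2`, i.e., the allocation is proportional for the
chooser with respect to `s`. -/
theorem cutChoose_chooser_PROP_of_subadditive
    {M S1 S2 : Type*} [Fintype M] [DecidableEq M] [Nonempty S1] [Nonempty S2]
    (v1 v2 : S1 × S2 → Finset M → ℝ)
    (h1mono : ∀ (σ : S1 × S2) (T T' : Finset M), T ⊆ T' → v1 σ T ≤ v1 σ T')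
    (h1norm : ∀ σ : S1 × S2, v1 σ ∅ = 0)
    (h1nonneg : ∀ (σ : S1 × S2) (T : Finset M), 0 ≤ v1 σ T)
    (h2mono : ∀ (σ : S1 × S2) (T T' : Finset M), T ⊆ T' → v2 σ T ≤ v2 σ T')
    (h2norm : ∀ σ : S1 × S2, v2 σ ∅ = 0)
    (h2nonneg : ∀ (σ : S1 × S2) (T : Finset M), 0 ≤ v2 σ T)
    -- `Tstar r1 b1` is the cutter's cut, as prescribed by the IDV Cut-&-Choose mechanism.
    -- If branch: `ξ₁(r1,b1) > MMS₁(r1,b1)`, i.e. some `T ∈ 𝒯(r1,b1)` has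
    -- `v1 (r1,b1) Tᶜ > MMS₁(r1,b1)`; then `Tstar r1 b1 ∈ 𝒯(r1,b1)` attains
    -- `ξ₁(r1,b1) = max_{T ∈ 𝒯(r1,b1)} v1 (r1,b1) Tᶜ`.
    (Tstar : S1 → S2 → Finset M)
    (hTstarIf : ∀ (r1 : S1) (b1 : S2),
      (∃ T : Finset M, v2 (r1, b1) Tᶜ ≤ v2 (r1, b1) T ∧
          mms2 (v1 (r1, b1)) < v1 (r1, b1) Tᶜ) →
        v2 (r1, b1) ((Tstar r1 b1)ᶜ) ≤ v2 (r1, b1) (Tstar r1 b1) ∧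
        ∀ T : Finset M, v2 (r1, b1) Tᶜ ≤ v2 (r1, b1) T →
          v1 (r1, b1) Tᶜ ≤ v1 (r1, b1) ((Tstar r1 b1)ᶜ))
    -- Else branch: `Tstar r1 b1` is the set provided by Plaut–Roughgarden for
    -- `v1 (r1, b1)`: `v1 T* ≥ v1 T*ᶜ = MMS₁(r1,b1)` and removing any single good
    -- from `T*` brings its value to at most `v1 T*ᶜ`.
    (hTstarElse : ∀ (r1 : S1) (b1 : S2),
      ¬ (∃ T : Finset M, v2 (r1, b1) Tᶜ ≤ v2 (r1, b1) T ∧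
          mms2 (v1 (r1, b1)) < v1 (r1, b1) Tᶜ) →
        v1 (r1, b1) ((Tstar r1 b1)ᶜ) ≤ v1 (r1, b1) (Tstar r1 b1) ∧
        v1 (r1, b1) ((Tstar r1 b1)ᶜ) = mms2 (v1 (r1, b1)) ∧
        ∀ j ∈ Tstar r1 b1,
          v1 (r1, b1) (Tstar r1 b1 \ {j}) ≤ v1 (r1, b1) ((Tstar r1 b1)ᶜ))
    (s1 : S1) (s2 : S2)
    (hsub : ∀ T T' : Finset M, v2 (s1, s2) (T ∪ T') ≤ v2 (s1, s2) T + v2 (s1, s2) T')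
    :
    v2 (s1, s2) (Finset.univ : Finset M) / 2 ≤
      v2 (s1, s2) (chooseSet v2 Tstar s1 s2 s2 s1) := by
  have key : v2 (s1, s2) (Finset.univ : Finset M) ≤
      v2 (s1, s2) (Tstar s1 s2) + v2 (s1, s2) ((Tstar s1 s2)ᶜ) := by
    have := hsub (Tstar s1 s2) ((Tstar s1 s2)ᶜ)
    simpa [Finset.union_compl] using this
  unfold chooseSet
  split
  · next h => linarith
  · next h => push_neg at h; linarith
end

section
/- For the IDV Cut-&-Choose mechanism with identical valuations v₁ = v₂, and every true signal vector s = (s₁,s₂), in the equilibrium ((s₁,s₂),(s₂,s₁)) the chooser's bundle A₂ satisfies v₂(s,A₂) ≥ max_{T⊆M} min(v₂(s,T), v₂(s,M∖T)), i.e., the chooser also receives at least his MMS with respect to s. -/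
open scoped Classical

/-- For the IDV Cut-&-Choose mechanism with identical valuations `v₁ = v₂`, in the
equilibrium `((s₁,s₂),(s₂,s₁))` the chooser also receives at least his maximin share
with respect to the true signal vector `s = (s₁,s₂)`. -/
theorem cutChoose_chooser_MMS_of_identical
    {M S1 S2 : Type*} [Fintype M] [DecidableEq M] [Nonempty S1] [Nonempty S2]
    (v1 v2 : S1 × S2 → Finset M → ℝ)
    (h1mono : ∀ (σ : S1 × S2) (T T' : Finset M), T ⊆ T' → v1 σ T ≤ v1 σ T')
    (h1norm : ∀ σ : S1 × S2, v1 σ ∅ = 0)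
    (h1nonneg : ∀ (σ : S1 × S2) (T : Finset M), 0 ≤ v1 σ T)
    (h2mono : ∀ (σ : S1 × S2) (T T' : Finset M), T ⊆ T' → v2 σ T ≤ v2 σ T')
    (h2norm : ∀ σ : S1 × S2, v2 σ ∅ = 0)
    (h2nonneg : ∀ (σ : S1 × S2) (T : Finset M), 0 ≤ v2 σ T)
    -- `Tstar r1 b1` is the cutter's cut, as prescribed by the IDV Cut-&-Choose mechanism.
    -- If branch: `ξ₁(r1,b1) > MMS₁(r1,b1)`, i.e. some `T ∈ 𝒯(r1,b1)` has
    -- `v1 (r1,b1) Tᶜ > MMS₁(r1,b1)`; then `Tstar r1 b1 ∈ 𝒯(r1,b1)` attains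
    -- `ξ₁(r1,b1) = max_{T ∈ 𝒯(r1,b1)} v1 (r1,b1) Tᶜ`.
    (Tstar : S1 → S2 → Finset M)
    (hTstarIf : ∀ (r1 : S1) (b1 : S2),
      (∃ T : Finset M, v2 (r1, b1) Tᶜ ≤ v2 (r1, b1) T ∧
          mms2 (v1 (r1, b1)) < v1 (r1, b1) Tᶜ) →
        v2 (r1, b1) ((Tstar r1 b1)ᶜ) ≤ v2 (r1, b1) (Tstar r1 b1) ∧
        ∀ T : Finset M, v2 (r1, b1) Tᶜ ≤ v2 (r1, b1) T →
          v1 (r1, b1) Tᶜ ≤ v1 (r1, b1) ((Tstar r1 b1)ᶜ))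
    -- Else branch: `Tstar r1 b1` is the set provided by Plaut–Roughgarden for
    -- `v1 (r1, b1)`: `v1 T* ≥ v1 T*ᶜ = MMS₁(r1,b1)` and removing any single good
    -- from `T*` brings its value to at most `v1 T*ᶜ`.
    (hTstarElse : ∀ (r1 : S1) (b1 : S2),
      ¬ (∃ T : Finset M, v2 (r1, b1) Tᶜ ≤ v2 (r1, b1) T ∧
          mms2 (v1 (r1, b1)) < v1 (r1, b1) Tᶜ) →
        v1 (r1, b1) ((Tstar r1 b1)ᶜ) ≤ v1 (r1, b1) (Tstar r1 b1) ∧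
        v1 (r1, b1) ((Tstar r1 b1)ᶜ) = mms2 (v1 (r1, b1)) ∧
        ∀ j ∈ Tstar r1 b1,
          v1 (r1, b1) (Tstar r1 b1 \ {j}) ≤ v1 (r1, b1) ((Tstar r1 b1)ᶜ))
    (s1 : S1) (s2 : S2)
    (hid : v1 = v2)
    :
    mms2 (v2 (s1, s2)) ≤ v2 (s1, s2) (chooseSet v2 Tstar s1 s2 s2 s1) := by
  subst hid
  by_cases h : ∃ T : Finset M, v1 (s1, s2) Tᶜ ≤ v1 (s1, s2) T ∧
      mms2 (v1 (s1, s2)) < v1 (s1, s2) Tᶜ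
  · obtain ⟨hc, hmax⟩ := hTstarIf s1 s2 h
    obtain ⟨T, hT1, hT2⟩ := h
    rw [chooseSet, if_pos hc]
    have := hmax T hT1
    linarith
  · obtain ⟨hc, heq, -⟩ := hTstarElse s1 s2 h
    rw [chooseSet, if_pos hc]
    linarith
end

section
/- For the IDV Price-&-Choose mechanism and every true signal vector s = (s₁,s₂) ∈ S₁×S₂, the report vector ((s₁,s₂),(s₂,s₁)) (each agent reports her own signal truthfully and guesses the other's signal correctly) is a pure Nash equilibrium. -/
/-- The AnyPrice Share of a valuation `v` with entitlement `α`: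
`APS_α(v) = inf_{p price vector} max {v T : T ⊆ M, p(T) ≤ α}`, where a price vector is
a nonnegative `p : M → ℝ` summing to `1`. -/
noncomputable def aps {M : Type*} [Fintype M] (α : ℝ) (v : Finset M → ℝ) : ℝ :=
  sInf {x : ℝ | ∃ p : M → ℝ, (∀ j, 0 ≤ p j) ∧ (∑ j, p j) = 1 ∧
    x = sSup {y : ℝ | ∃ T : Finset M, (∑ j ∈ T, p j) ≤ α ∧ y = v T}}

/-- For the IDV Price-&-Choose mechanism and every true signal vector `s = (s₁,s₂)`,
the report vector `((s₁,s₂),(s₂,s₁))` is a pure Nash equilibrium. -/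
theorem priceChoose_truthful_is_PNE
    {M S1 S2 : Type*} [Fintype M] [DecidableEq M] [Nonempty S1] [Nonempty S2]
    (α1 α2 : ℝ) (hα1 : 0 < α1 ∧ α1 < 1) (hα2 : 0 < α2 ∧ α2 < 1) (hsum : α1 + α2 = 1)
    (v1 v2 : S1 × S2 → Finset M → ℝ)
    (h1mono : ∀ (σ : S1 × S2) (T T' : Finset M), T ⊆ T' → v1 σ T ≤ v1 σ T')
    (h1norm : ∀ σ : S1 × S2, v1 σ ∅ = 0)
    (h1nonneg : ∀ (σ : S1 × S2) (T : Finset M), 0 ≤ v1 σ T)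
    (h2mono : ∀ (σ : S1 × S2) (T T' : Finset M), T ⊆ T' → v2 σ T ≤ v2 σ T')
    (h2norm : ∀ σ : S1 × S2, v2 σ ∅ = 0)
    (h2nonneg : ∀ (σ : S1 × S2) (T : Finset M), 0 ≤ v2 σ T)
    -- The pricer's side of the IDV Price-&-Choose mechanism: given agent 1's report
    -- `(r1, b1)`, `pstar r1 b1` is a price vector and `Tstar r1 b1` is a set in
    -- `𝒯(r1,b1)` maximizing `v1 (r1,b1) (M ∖ ·)`, with `Tstar r1 b1 ∈ 𝒯(r1,b1,pstar r1 b1)`.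
    (Tstar : S1 → S2 → Finset M) (pstar : S1 → S2 → M → ℝ)
    (hpstar : ∀ (r1 : S1) (b1 : S2),
      (∀ j, 0 ≤ pstar r1 b1 j) ∧ (∑ j, pstar r1 b1 j) = 1)
    -- `Tstar r1 b1 ∈ 𝒯(r1, b1, pstar r1 b1)`: it is affordable and maximizes
    -- `v2 (r1,b1)` among sets affordable at prices `pstar r1 b1` with budget `α2`.
    (hTfeas : ∀ (r1 : S1) (b1 : S2), (∑ j ∈ Tstar r1 b1, pstar r1 b1 j) ≤ α2)
    (hTopt : ∀ (r1 : S1) (b1 : S2) (T : Finset M),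
      (∑ j ∈ T, pstar r1 b1 j) ≤ α2 → v2 (r1, b1) T ≤ v2 (r1, b1) (Tstar r1 b1))
    -- `Tstar r1 b1` maximizes `v1 (r1,b1) (M ∖ ·)` over all of
    -- `𝒯(r1,b1) = ⋃_p 𝒯(r1,b1,p)`.
    (hTmax : ∀ (r1 : S1) (b1 : S2) (T : Finset M),
      (∃ p : M → ℝ, (∀ j, 0 ≤ p j) ∧ (∑ j, p j) = 1 ∧ (∑ j ∈ T, p j) ≤ α2 ∧
          ∀ T' : Finset M, (∑ j ∈ T', p j) ≤ α2 → v2 (r1, b1) T' ≤ v2 (r1, b1) T) →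
        v1 (r1, b1) Tᶜ ≤ v1 (r1, b1) ((Tstar r1 b1)ᶜ))
    -- The chooser's side: given also agent 2's report `(r2, b2)`,
    -- `choose2 r1 b1 r2 b2` is the bundle `A₂` that agent 2 selects: it is affordable
    -- at prices `pstar r1 b1` with budget `α2`, maximizes `v2 (b2, r2)` among such
    -- sets, and equals `Tstar r1 b1` whenever `Tstar r1 b1` attains that maximum.
    -- The mechanism outputs the allocation `(A₁, A₂)` with `A₁ = A₂ᶜ`.
    (choose2 : S1 → S2 → S2 → S1 → Finset M)
    (hchoose : ∀ (r1 : S1) (b1 : S2) (r2 : S2) (b2 : S1),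
      (∑ j ∈ choose2 r1 b1 r2 b2, pstar r1 b1 j) ≤ α2 ∧
      (∀ T : Finset M, (∑ j ∈ T, pstar r1 b1 j) ≤ α2 →
        v2 (b2, r2) T ≤ v2 (b2, r2) (choose2 r1 b1 r2 b2)) ∧
      ((∀ T : Finset M, (∑ j ∈ T, pstar r1 b1 j) ≤ α2 →
          v2 (b2, r2) T ≤ v2 (b2, r2) (Tstar r1 b1)) →
        choose2 r1 b1 r2 b2 = Tstar r1 b1))
    (s1 : S1) (s2 : S2) :
    (∀ (r1' : S1) (b1' : S2),
        v1 (s1, s2) ((choose2 r1' b1' s2 s1)ᶜ) ≤ v1 (s1, s2) ((choose2 s1 s2 s2 s1)ᶜ)) ∧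
    (∀ (r2' : S2) (b2' : S1),
        v2 (s1, s2) (choose2 s1 s2 r2' b2') ≤ v2 (s1, s2) (choose2 s1 s2 s2 s1)) := by
  have htruth : choose2 s1 s2 s2 s1 = Tstar s1 s2 :=
    (hchoose s1 s2 s2 s1).2.2 (fun T hT => hTopt s1 s2 T hT)
  constructor
  · intro r1' b1'
    rw [htruth]
    exact hTmax s1 s2 (choose2 r1' b1' s2 s1)
      ⟨pstar r1' b1', (hpstar r1' b1').1, (hpstar r1' b1').2,
        (hchoose r1' b1' s2 s1).1, (hchoose r1' b1' s2 s1).2.1⟩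
  · intro r2' b2'
    rw [htruth]
    exact hTopt s1 s2 _ (hchoose s1 s2 r2' b2').1
end

section
/- For the IDV Price-&-Choose mechanism and every true signal vector s = (s₁,s₂), if the pricer's valuation v₁(s,·) is XOS, then in the pure Nash equilibrium ((s₁,s₂),(s₂,s₁)) the pricer's bundle A₁ satisfies v₁(s,A₁) ≥ α₁·v₁(s,M), i.e., the pricer receives at least her proportional share with respect to s. -/
/-- In the PNE `((s₁,s₂),(s₂,s₁))` of the IDV Price-&-Choose mechanism, if the pricer's
valuation `v₁(s,·)` is XOS, then her bundle `A₁ = A₂ᶜ` satisfies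
`v₁(s,A₁) ≥ α₁ · v₁(s,M)`, i.e., she receives at least her proportional share. -/
theorem priceChoose_pricer_PROP_of_XOS
    {M S1 S2 : Type*} [Fintype M] [DecidableEq M] [Nonempty S1] [Nonempty S2]
    (α1 α2 : ℝ) (hα1 : 0 < α1 ∧ α1 < 1) (hα2 : 0 < α2 ∧ α2 < 1) (hsum : α1 + α2 = 1)
    (v1 v2 : S1 × S2 → Finset M → ℝ)
    (h1mono : ∀ (σ : S1 × S2) (T T' : Finset M), T ⊆ T' → v1 σ T ≤ v1 σ T')
    (h1norm : ∀ σ : S1 × S2, v1 σ ∅ = 0)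
    (h1nonneg : ∀ (σ : S1 × S2) (T : Finset M), 0 ≤ v1 σ T)
    (h2mono : ∀ (σ : S1 × S2) (T T' : Finset M), T ⊆ T' → v2 σ T ≤ v2 σ T')
    (h2norm : ∀ σ : S1 × S2, v2 σ ∅ = 0)
    (h2nonneg : ∀ (σ : S1 × S2) (T : Finset M), 0 ≤ v2 σ T)
    -- The pricer's side of the IDV Price-&-Choose mechanism: given agent 1's report
    -- `(r1, b1)`, `pstar r1 b1` is a price vector and `Tstar r1 b1` is a set in
    -- `𝒯(r1,b1)` maximizing `v1 (r1,b1) (M ∖ ·)`, with `Tstar r1 b1 ∈ 𝒯(r1,b1,pstar r1 b1)`.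
    (Tstar : S1 → S2 → Finset M) (pstar : S1 → S2 → M → ℝ)
    (hpstar : ∀ (r1 : S1) (b1 : S2),
      (∀ j, 0 ≤ pstar r1 b1 j) ∧ (∑ j, pstar r1 b1 j) = 1)
    -- `Tstar r1 b1 ∈ 𝒯(r1, b1, pstar r1 b1)`: it is affordable and maximizes
    -- `v2 (r1,b1)` among sets affordable at prices `pstar r1 b1` with budget `α2`.
    (hTfeas : ∀ (r1 : S1) (b1 : S2), (∑ j ∈ Tstar r1 b1, pstar r1 b1 j) ≤ α2)
    (hTopt : ∀ (r1 : S1) (b1 : S2) (T : Finset M),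
      (∑ j ∈ T, pstar r1 b1 j) ≤ α2 → v2 (r1, b1) T ≤ v2 (r1, b1) (Tstar r1 b1))
    -- `Tstar r1 b1` maximizes `v1 (r1,b1) (M ∖ ·)` over all of
    -- `𝒯(r1,b1) = ⋃_p 𝒯(r1,b1,p)`.
    (hTmax : ∀ (r1 : S1) (b1 : S2) (T : Finset M),
      (∃ p : M → ℝ, (∀ j, 0 ≤ p j) ∧ (∑ j, p j) = 1 ∧ (∑ j ∈ T, p j) ≤ α2 ∧
          ∀ T' : Finset M, (∑ j ∈ T', p j) ≤ α2 → v2 (r1, b1) T' ≤ v2 (r1, b1) T) →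
        v1 (r1, b1) Tᶜ ≤ v1 (r1, b1) ((Tstar r1 b1)ᶜ))
    -- The chooser's side: given also agent 2's report `(r2, b2)`,
    -- `choose2 r1 b1 r2 b2` is the bundle `A₂` that agent 2 selects: it is affordable
    -- at prices `pstar r1 b1` with budget `α2`, maximizes `v2 (b2, r2)` among such
    -- sets, and equals `Tstar r1 b1` whenever `Tstar r1 b1` attains that maximum.
    -- The mechanism outputs the allocation `(A₁, A₂)` with `A₁ = A₂ᶜ`.
    (choose2 : S1 → S2 → S2 → S1 → Finset M)
    (hchoose : ∀ (r1 : S1) (b1 : S2) (r2 : S2) (b2 : S1),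
      (∑ j ∈ choose2 r1 b1 r2 b2, pstar r1 b1 j) ≤ α2 ∧
      (∀ T : Finset M, (∑ j ∈ T, pstar r1 b1 j) ≤ α2 →
        v2 (b2, r2) T ≤ v2 (b2, r2) (choose2 r1 b1 r2 b2)) ∧
      ((∀ T : Finset M, (∑ j ∈ T, pstar r1 b1 j) ≤ α2 →
          v2 (b2, r2) T ≤ v2 (b2, r2) (Tstar r1 b1)) →
        choose2 r1 b1 r2 b2 = Tstar r1 b1))
    (s1 : S1) (s2 : S2) (hxos : IsXOS (v1 (s1, s2))) :
    α1 * v1 (s1, s2) (Finset.univ : Finset M) ≤ v1 (s1, s2) ((choose2 s1 s2 s2 s1)ᶜ) := by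
  
  -- truthful choice equals Tstar
  have heq : choose2 s1 s2 s2 s1 = Tstar s1 s2 :=
    (hchoose s1 s2 s2 s1).2.2 (fun T hT => hTopt s1 s2 T hT)
  rw [heq]
  obtain ⟨l, a, ha, hrep⟩ := hxos
  obtain ⟨k, -, hk⟩ := Finset.exists_mem_eq_sup' (Finset.univ_nonempty (α := Fin (l+1)))
      (fun k => ∑ j ∈ (Finset.univ : Finset M), a k j)
  have hVuniv : v1 (s1, s2) Finset.univ = ∑ j, a k j := by
    rw [hrep]; exact hk
  set S : ℝ := ∑ j, a k j with hS
  have hSnn : 0 ≤ S := Finset.sum_nonneg fun j _ => ha k j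
  rcases eq_or_lt_of_le hSnn with hS0 | hSpos
  · have : v1 (s1, s2) Finset.univ = 0 := by rw [hVuniv, ← hS0]
    rw [this, mul_zero]
    exact h1nonneg _ _
  · set p : M → ℝ := fun j => a k j / S with hp
    have hpnn : ∀ j, 0 ≤ p j := fun j => div_nonneg (ha k j) hSnn
    have hpsum : ∑ j, p j = 1 := by
      simp only [hp, ← Finset.sum_div]
      exact div_self (ne_of_gt hSpos)
    -- pick a v2-maximizer among affordable sets
    have hne : (Finset.univ.powerset.filter
        (fun T : Finset M => ∑ j ∈ T, p j ≤ α2)).Nonempty := by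
      refine ⟨∅, ?_⟩
      simp only [Finset.mem_filter, Finset.mem_powerset]
      exact ⟨Finset.empty_subset _, by simp [le_of_lt hα2.1]⟩
    obtain ⟨T0, hT0mem, hT0max⟩ := Finset.exists_max_image _ (v2 (s1, s2)) hne
    simp only [Finset.mem_filter, Finset.mem_powerset] at hT0mem
    have hkey : v1 (s1, s2) T0ᶜ ≤ v1 (s1, s2) (Tstar s1 s2)ᶜ := by
      refine hTmax s1 s2 T0 ⟨p, hpnn, hpsum, hT0mem.2, fun T' hT' => ?_⟩
      exact hT0max T' (by simp [Finset.mem_filter, Finset.mem_powerset, hT'])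
    refine le_trans ?_ hkey
    have hT0a : ∑ j ∈ T0, a k j ≤ α2 * S := by
      have := hT0mem.2
      rw [hp] at this
      have h2 : (∑ j ∈ T0, a k j) / S ≤ α2 := by rwa [← Finset.sum_div] at this
      calc ∑ j ∈ T0, a k j = (∑ j ∈ T0, a k j) / S * S := by
            field_simp
        _ ≤ α2 * S := by
            exact mul_le_mul_of_nonneg_right h2 hSnn
    have hsplit : (∑ j ∈ T0ᶜ, a k j) = S - ∑ j ∈ T0, a k j := by
      rw [hS, ← Finset.sum_compl_add_sum T0 (fun j => a k j)]; ring
    have hlb : α1 * S ≤ ∑ j ∈ T0ᶜ, a k j := by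
      rw [hsplit]
      nlinarith [hsum]
    have hxosTc : (∑ j ∈ T0ᶜ, a k j) ≤ v1 (s1, s2) T0ᶜ := by
      rw [hrep]
      exact Finset.le_sup' (fun k' => ∑ j ∈ T0ᶜ, a k' j) (Finset.mem_univ k)
    rw [hVuniv]
    exact le_trans hlb hxosTc
end

section
/- For the IDV Price-&-Choose mechanism and every true signal vector s = (s₁,s₂), in the equilibrium ((s₁,s₂),(s₂,s₁)) the chooser's bundle A₂ satisfies v₂(s,A₂) ≥ APS_{α₂}(v₂(s,·)), i.e., the chooser receives at least his AnyPrice Share with respect to s. -/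
/-- In the equilibrium `((s₁,s₂),(s₂,s₁))` of the IDV Price-&-Choose mechanism, the
chooser's bundle `A₂` satisfies `v₂(s,A₂) ≥ APS_{α₂}(v₂(s,·))`. -/
theorem priceChoose_chooser_APS
    {M S1 S2 : Type*} [Fintype M] [DecidableEq M] [Nonempty S1] [Nonempty S2]
    (α1 α2 : ℝ) (hα1 : 0 < α1 ∧ α1 < 1) (hα2 : 0 < α2 ∧ α2 < 1) (hsum : α1 + α2 = 1)
    (v1 v2 : S1 × S2 → Finset M → ℝ)
    (h1mono : ∀ (σ : S1 × S2) (T T' : Finset M), T ⊆ T' → v1 σ T ≤ v1 σ T')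
    (h1norm : ∀ σ : S1 × S2, v1 σ ∅ = 0)
    (h1nonneg : ∀ (σ : S1 × S2) (T : Finset M), 0 ≤ v1 σ T)
    (h2mono : ∀ (σ : S1 × S2) (T T' : Finset M), T ⊆ T' → v2 σ T ≤ v2 σ T')
    (h2norm : ∀ σ : S1 × S2, v2 σ ∅ = 0)
    (h2nonneg : ∀ (σ : S1 × S2) (T : Finset M), 0 ≤ v2 σ T)
    -- The pricer's side of the IDV Price-&-Choose mechanism: given agent 1's report
    -- `(r1, b1)`, `pstar r1 b1` is a price vector and `Tstar r1 b1` is a set in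
    -- `𝒯(r1,b1)` maximizing `v1 (r1,b1) (M ∖ ·)`, with `Tstar r1 b1 ∈ 𝒯(r1,b1,pstar r1 b1)`.
    (Tstar : S1 → S2 → Finset M) (pstar : S1 → S2 → M → ℝ)
    (hpstar : ∀ (r1 : S1) (b1 : S2),
      (∀ j, 0 ≤ pstar r1 b1 j) ∧ (∑ j, pstar r1 b1 j) = 1)
    -- `Tstar r1 b1 ∈ 𝒯(r1, b1, pstar r1 b1)`: it is affordable and maximizes
    -- `v2 (r1,b1)` among sets affordable at prices `pstar r1 b1` with budget `α2`.
    (hTfeas : ∀ (r1 : S1) (b1 : S2), (∑ j ∈ Tstar r1 b1, pstar r1 b1 j) ≤ α2)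
    (hTopt : ∀ (r1 : S1) (b1 : S2) (T : Finset M),
      (∑ j ∈ T, pstar r1 b1 j) ≤ α2 → v2 (r1, b1) T ≤ v2 (r1, b1) (Tstar r1 b1))
    -- `Tstar r1 b1` maximizes `v1 (r1,b1) (M ∖ ·)` over all of
    -- `𝒯(r1,b1) = ⋃_p 𝒯(r1,b1,p)`.
    (hTmax : ∀ (r1 : S1) (b1 : S2) (T : Finset M),
      (∃ p : M → ℝ, (∀ j, 0 ≤ p j) ∧ (∑ j, p j) = 1 ∧ (∑ j ∈ T, p j) ≤ α2 ∧
          ∀ T' : Finset M, (∑ j ∈ T', p j) ≤ α2 → v2 (r1, b1) T' ≤ v2 (r1, b1) T) →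
        v1 (r1, b1) Tᶜ ≤ v1 (r1, b1) ((Tstar r1 b1)ᶜ))
    -- The chooser's side: given also agent 2's report `(r2, b2)`,
    -- `choose2 r1 b1 r2 b2` is the bundle `A₂` that agent 2 selects: it is affordable
    -- at prices `pstar r1 b1` with budget `α2`, maximizes `v2 (b2, r2)` among such
    -- sets, and equals `Tstar r1 b1` whenever `Tstar r1 b1` attains that maximum.
    -- The mechanism outputs the allocation `(A₁, A₂)` with `A₁ = A₂ᶜ`.
    (choose2 : S1 → S2 → S2 → S1 → Finset M)
    (hchoose : ∀ (r1 : S1) (b1 : S2) (r2 : S2) (b2 : S1),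
      (∑ j ∈ choose2 r1 b1 r2 b2, pstar r1 b1 j) ≤ α2 ∧
      (∀ T : Finset M, (∑ j ∈ T, pstar r1 b1 j) ≤ α2 →
        v2 (b2, r2) T ≤ v2 (b2, r2) (choose2 r1 b1 r2 b2)) ∧
      ((∀ T : Finset M, (∑ j ∈ T, pstar r1 b1 j) ≤ α2 →
          v2 (b2, r2) T ≤ v2 (b2, r2) (Tstar r1 b1)) →
        choose2 r1 b1 r2 b2 = Tstar r1 b1))
    (s1 : S1) (s2 : S2) :
    aps α2 (v2 (s1, s2)) ≤ v2 (s1, s2) (choose2 s1 s2 s2 s1) := by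
  obtain ⟨hp1, hp2⟩ := hpstar s1 s2
  obtain ⟨hcf, hcmax, _⟩ := hchoose s1 s2 s2 s1
  have hbdd : BddBelow {x : ℝ | ∃ p : M → ℝ, (∀ j, 0 ≤ p j) ∧ (∑ j, p j) = 1 ∧
      x = sSup {y : ℝ | ∃ T : Finset M, (∑ j ∈ T, p j) ≤ α2 ∧ y = v2 (s1, s2) T}} := by
    refine ⟨0, ?_⟩
    rintro x ⟨p, hp, hps, rfl⟩
    have h0 : (0 : ℝ) ∈ {y : ℝ | ∃ T : Finset M, (∑ j ∈ T, p j) ≤ α2 ∧ y = v2 (s1, s2) T} :=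
      ⟨∅, by simpa using hα2.1.le, (h2norm _).symm⟩
    have hA : BddAbove {y : ℝ | ∃ T : Finset M, (∑ j ∈ T, p j) ≤ α2 ∧ y = v2 (s1, s2) T} := by
      apply (Set.finite_range (v2 (s1, s2))).bddAbove.mono
      rintro y ⟨T, _, rfl⟩; exact ⟨T, rfl⟩
    exact le_csSup hA h0
  have hmem : sSup {y : ℝ | ∃ T : Finset M, (∑ j ∈ T, pstar s1 s2 j) ≤ α2 ∧ y = v2 (s1, s2) T} ∈
      {x : ℝ | ∃ p : M → ℝ, (∀ j, 0 ≤ p j) ∧ (∑ j, p j) = 1 ∧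
      x = sSup {y : ℝ | ∃ T : Finset M, (∑ j ∈ T, p j) ≤ α2 ∧ y = v2 (s1, s2) T}} :=
    ⟨pstar s1 s2, hp1, hp2, rfl⟩
  refine le_trans (csInf_le hbdd hmem) (csSup_le ⟨v2 (s1, s2) ∅, ∅, by simpa using hα2.1.le, rfl⟩ ?_)
  rintro y ⟨T, hT, rfl⟩
  exact hcmax T hT
end

section
/- For every finite set M, entitlements α₁, α₂ ∈ (0,1) with α₁ + α₂ = 1, a monotone normalized XOS valuation v₁ : 2^M → ℝ≥0, and a monotone normalized valuation v₂ : 2^M → ℝ≥0, there exists a partition (A₁,A₂) of M such that v₁(A₁) ≥ α₁·v₁(M) and v₂(A₂) ≥ APS_{α₂}(v₂). -/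
/-!
Take the additive clause `a` of the XOS valuation `v₁` that attains `v₁(M)` and use `a`,
normalised, as a price vector. The AnyPrice share of `v₂` at these prices is attained by a
bundle `T` of price at most `α₂`, so `Tᶜ` has price at least `α₁`, i.e.
`v₁(Tᶜ) ≥ a(Tᶜ) ≥ α₁·a(M) = α₁·v₁(M)`.
-/

open Finset

section

variable {M : Type*} [Fintype M]

theorem IsXOS.exists_additive_le_eq_univ {v : Finset M → ℝ} (hv : IsXOS v) :
    ∃ a : M → ℝ, (∀ j, 0 ≤ a j) ∧ (∀ T, ∑ j ∈ T, a j ≤ v T) ∧ v univ = ∑ j, a j := by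
  obtain ⟨l, a, ha, hrep⟩ := hv
  obtain ⟨k, -, hk⟩ := exists_mem_eq_sup' univ_nonempty fun k => ∑ j, a k j
  refine ⟨a k, ha k, fun T => ?_, by rw [hrep, hk]⟩
  rw [hrep]
  exact le_sup' (fun k => ∑ j ∈ T, a k j) (mem_univ k)

-- There are no price vectors, and `sInf ∅ = 0` by convention.
theorem aps_of_isEmpty [IsEmpty M] (α : ℝ) (v : Finset M → ℝ) : aps α v = 0 := by
  rw [aps]
  convert Real.sInf_empty using 2
  refine Set.eq_empty_of_forall_notMem ?_
  rintro _ ⟨p, -, hp1, -⟩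
  simp at hp1

theorem exists_aps_le_of_price {α : ℝ} (hα : 0 ≤ α) (v : Finset M → ℝ) {p : M → ℝ}
    (hp0 : ∀ j, 0 ≤ p j) (hp1 : ∑ j, p j = 1) :
    ∃ T : Finset M, ∑ j ∈ T, p j ≤ α ∧ aps α v ≤ v T := by
  let affordable (q : M → ℝ) : Set ℝ := {y | ∃ T : Finset M, ∑ j ∈ T, q j ≤ α ∧ y = v T}
  have empty_mem (q : M → ℝ) : v ∅ ∈ affordable q := ⟨∅, by simpa using hα, rfl⟩
  have finite (q : M → ℝ) : (affordable q).Finite :=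
    (Set.finite_range v).subset <| by rintro y ⟨T, -, rfl⟩; exact ⟨T, rfl⟩
  obtain ⟨T, hT, hsup⟩ := Set.Nonempty.csSup_mem ⟨_, empty_mem p⟩ (finite p)
  refine ⟨T, hT, hsup ▸ csInf_le ⟨v ∅, ?_⟩ ⟨p, hp0, hp1, rfl⟩⟩
  rintro x ⟨q, -, -, rfl⟩
  exact le_csSup (finite q).bddAbove (empty_mem q)

theorem exists_price_sum_mul_le [Nonempty M] {a : M → ℝ} (ha : ∀ j, 0 ≤ a j) :
    ∃ p : M → ℝ, (∀ j, 0 ≤ p j) ∧ ∑ j, p j = 1 ∧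
      ∀ S : Finset M, (∑ j, a j) * ∑ j ∈ S, p j ≤ ∑ j ∈ S, a j := by
  rcases (sum_nonneg fun j _ => ha j : 0 ≤ ∑ j, a j).eq_or_lt with hs | hs
  · refine ⟨fun _ => (Fintype.card M : ℝ)⁻¹, fun _ => by positivity, by simp, fun S => ?_⟩
    rw [← hs, zero_mul]
    exact sum_nonneg fun j _ => ha j
  · refine ⟨fun j => a j / ∑ j, a j, fun j => div_nonneg (ha j) hs.le,
      by rw [← sum_div, div_self hs.ne'], fun S => ?_⟩
    rw [← sum_div, mul_div_cancel₀ _ hs.ne']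

theorem exists_aps_le_and_mul_sum_le_sum_compl [DecidableEq M] {α₁ α₂ : ℝ} (hα₂ : 0 ≤ α₂)
    (hsum : α₁ + α₂ = 1) {v : Finset M → ℝ} (hv : v ∅ = 0) {a : M → ℝ} (ha : ∀ j, 0 ≤ a j) :
    ∃ T : Finset M, aps α₂ v ≤ v T ∧ α₁ * ∑ j, a j ≤ ∑ j ∈ Tᶜ, a j := by
  cases isEmpty_or_nonempty M
  · exact ⟨∅, by rw [aps_of_isEmpty, hv], by simp⟩
  obtain ⟨p, hp0, hp1, hpa⟩ := exists_price_sum_mul_le ha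
  obtain ⟨T, hTp, hTv⟩ := exists_aps_le_of_price hα₂ v hp0 hp1
  have hcompl : α₁ ≤ ∑ j ∈ Tᶜ, p j := by
    have := sum_add_sum_compl T p
    linarith
  refine ⟨T, hTv, ?_⟩
  calc α₁ * ∑ j, a j ≤ (∑ j, a j) * ∑ j ∈ Tᶜ, p j := by
        rw [mul_comm]
        exact mul_le_mul_of_nonneg_left hcompl (sum_nonneg fun j _ => ha j)
    _ ≤ ∑ j ∈ Tᶜ, a j := hpa Tᶜ

end

theorem exists_PROP_APS_partition_general {M : Type*} [Fintype M] [DecidableEq M]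
    (α1 α2 : ℝ) (hα2 : 0 < α2 ∧ α2 < 1) (hsum : α1 + α2 = 1)
    (v1 v2 : Finset M → ℝ)
    (h1xos : IsXOS v1)
    (h2norm : v2 ∅ = 0) :
    ∃ A1 : Finset M,
      α1 * v1 (Finset.univ : Finset M) ≤ v1 A1 ∧
      aps α2 v2 ≤ v2 A1ᶜ := by
  obtain ⟨a, ha, hav, hv1⟩ := h1xos.exists_additive_le_eq_univ
  obtain ⟨T, hT2, hT1⟩ := exists_aps_le_and_mul_sum_le_sum_compl hα2.1.le hsum h2norm ha
  exact ⟨Tᶜ, hv1 ▸ hT1.trans (hav Tᶜ), by rwa [compl_compl]⟩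

/-- For every finite set `M`, entitlements `α₁, α₂ ∈ (0,1)` with `α₁ + α₂ = 1`, a
monotone normalized (nonnegative) XOS valuation `v₁` and a monotone normalized
(nonnegative) valuation `v₂`, there exists a partition `(A₁, A₂)` of `M`
(here `A₂ = A₁ᶜ`) with `v₁(A₁) ≥ α₁·v₁(M)` and `v₂(A₂) ≥ APS_{α₂}(v₂)`. -/
theorem exists_PROP_APS_partition {M : Type*} [Fintype M] [DecidableEq M]
    (α1 α2 : ℝ) (hα1 : 0 < α1 ∧ α1 < 1) (hα2 : 0 < α2 ∧ α2 < 1) (hsum : α1 + α2 = 1)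
    (v1 v2 : Finset M → ℝ)
    (h1mono : ∀ T T' : Finset M, T ⊆ T' → v1 T ≤ v1 T')
    (h1norm : v1 ∅ = 0)
    (h1nonneg : ∀ T : Finset M, 0 ≤ v1 T)
    (h1xos : IsXOS v1)
    (h2mono : ∀ T T' : Finset M, T ⊆ T' → v2 T ≤ v2 T')
    (h2norm : v2 ∅ = 0)
    (h2nonneg : ∀ T : Finset M, 0 ≤ v2 T) :
    ∃ A1 : Finset M,
      α1 * v1 (Finset.univ : Finset M) ≤ v1 A1 ∧
      aps α2 v2 ≤ v2 A1ᶜ :=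
  exists_PROP_APS_partition_general α1 α2 hα2 hsum v1 v2 h1xos h2norm
end

section
/- Suppose both agents have independent additive valuations, i.e., v_i(s,T) = Σ_{j∈T} u_i(s_i, j) for functions u_i : S_i × M → ℝ≥0 (so v_i depends only on agent i's own signal and is additive over goods). Then for the IDV Price-&-Choose mechanism and every true signal vector s, every pure Nash equilibrium yields an allocation (A₁,A₂) with v₁(s,A₁) ≥ APS_{α₁}(v₁(s,·)) and v₂(s,A₂) ≥ APS_{α₂}(v₂(s,·)), i.e., in every equilibrium both agents receive their AnyPrice Share. -/
/-- If some price vector `p` certifies that every `α`-affordable bundle has value at most `c`,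
then the AnyPrice Share of the additive valuation `T ↦ ∑ j ∈ T, u j` is at most `c`. -/
lemma aps_le_of_price {M : Type*} [Fintype M] (α : ℝ) (hα : 0 < α) (u : M → ℝ)
    (hu : ∀ j, 0 ≤ u j) (p : M → ℝ) (hp : ∀ j, 0 ≤ p j) (hp1 : (∑ j, p j) = 1) (c : ℝ)
    (hc : ∀ T : Finset M, (∑ j ∈ T, p j) ≤ α → (∑ j ∈ T, u j) ≤ c) :
    aps α (fun T => ∑ j ∈ T, u j) ≤ c := by
  have hmem : sSup {y : ℝ | ∃ T : Finset M, (∑ j ∈ T, p j) ≤ α ∧ y = ∑ j ∈ T, u j}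
      ∈ {x : ℝ | ∃ q : M → ℝ, (∀ j, 0 ≤ q j) ∧ (∑ j, q j) = 1 ∧
        x = sSup {y : ℝ | ∃ T : Finset M, (∑ j ∈ T, q j) ≤ α ∧
          y = (fun T => ∑ j ∈ T, u j) T}} := ⟨p, hp, hp1, rfl⟩
  have hbb : BddBelow {x : ℝ | ∃ q : M → ℝ, (∀ j, 0 ≤ q j) ∧ (∑ j, q j) = 1 ∧
      x = sSup {y : ℝ | ∃ T : Finset M, (∑ j ∈ T, q j) ≤ α ∧
        y = (fun T => ∑ j ∈ T, u j) T}} := by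
    refine ⟨0, ?_⟩
    rintro x ⟨q, hq, hq1, rfl⟩
    have h0 : (0:ℝ) ∈ {y : ℝ | ∃ T : Finset M, (∑ j ∈ T, q j) ≤ α ∧
        y = (fun T => ∑ j ∈ T, u j) T} := ⟨∅, by simpa using hα.le, by simp⟩
    have hba : BddAbove {y : ℝ | ∃ T : Finset M, (∑ j ∈ T, q j) ≤ α ∧
        y = (fun T => ∑ j ∈ T, u j) T} := by
      refine ⟨∑ j, u j, ?_⟩
      rintro y ⟨T, hT, rfl⟩
      exact Finset.sum_le_sum_of_subset_of_nonneg (Finset.subset_univ T)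
        (fun j _ _ => hu j)
    exact le_csSup hba h0
  refine le_trans (csInf_le hbb hmem) ?_
  refine csSup_le ⟨0, ∅, by simpa using hα.le, by simp⟩ ?_
  rintro y ⟨T, hT, rfl⟩
  exact hc T hT

/-- Suppose both agents have independent additive valuations:
`v_i((σ₁,σ₂), T) = Σ_{j∈T} u_i(σ_i, j)` with `u_i ≥ 0`. Then for the IDV
Price-&-Choose mechanism and every true signal vector `s = (s₁,s₂)`, every pure Nash
equilibrium `((r₁,b₁),(r₂,b₂))` yields an allocation `(A₁,A₂)` (with
`A₂ = choose2 r₁ b₁ r₂ b₂` and `A₁ = A₂ᶜ`) in which both agents receive at least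
their AnyPrice Share with respect to `s`. -/
theorem priceChoose_all_PNE_APS_of_independent_additive
    {M S1 S2 : Type*} [Fintype M] [DecidableEq M] [Nonempty S1] [Nonempty S2]
    (α1 α2 : ℝ) (hα1 : 0 < α1 ∧ α1 < 1) (hα2 : 0 < α2 ∧ α2 < 1) (hsum : α1 + α2 = 1)
    (v1 v2 : S1 × S2 → Finset M → ℝ)
    (h1mono : ∀ (σ : S1 × S2) (T T' : Finset M), T ⊆ T' → v1 σ T ≤ v1 σ T')
    (h1norm : ∀ σ : S1 × S2, v1 σ ∅ = 0)
    (h1nonneg : ∀ (σ : S1 × S2) (T : Finset M), 0 ≤ v1 σ T)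
    (h2mono : ∀ (σ : S1 × S2) (T T' : Finset M), T ⊆ T' → v2 σ T ≤ v2 σ T')
    (h2norm : ∀ σ : S1 × S2, v2 σ ∅ = 0)
    (h2nonneg : ∀ (σ : S1 × S2) (T : Finset M), 0 ≤ v2 σ T)
    -- The pricer's side of the IDV Price-&-Choose mechanism: given agent 1's report
    -- `(r1, b1)`, `pstar r1 b1` is a price vector and `Tstar r1 b1` is a set in
    -- `𝒯(r1,b1)` maximizing `v1 (r1,b1) (M ∖ ·)`, with `Tstar r1 b1 ∈ 𝒯(r1,b1,pstar r1 b1)`.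
    (Tstar : S1 → S2 → Finset M) (pstar : S1 → S2 → M → ℝ)
    (hpstar : ∀ (r1 : S1) (b1 : S2),
      (∀ j, 0 ≤ pstar r1 b1 j) ∧ (∑ j, pstar r1 b1 j) = 1)
    -- `Tstar r1 b1 ∈ 𝒯(r1, b1, pstar r1 b1)`: it is affordable and maximizes
    -- `v2 (r1,b1)` among sets affordable at prices `pstar r1 b1` with budget `α2`.
    (hTfeas : ∀ (r1 : S1) (b1 : S2), (∑ j ∈ Tstar r1 b1, pstar r1 b1 j) ≤ α2)
    (hTopt : ∀ (r1 : S1) (b1 : S2) (T : Finset M),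
      (∑ j ∈ T, pstar r1 b1 j) ≤ α2 → v2 (r1, b1) T ≤ v2 (r1, b1) (Tstar r1 b1))
    -- `Tstar r1 b1` maximizes `v1 (r1,b1) (M ∖ ·)` over all of
    -- `𝒯(r1,b1) = ⋃_p 𝒯(r1,b1,p)`.
    (hTmax : ∀ (r1 : S1) (b1 : S2) (T : Finset M),
      (∃ p : M → ℝ, (∀ j, 0 ≤ p j) ∧ (∑ j, p j) = 1 ∧ (∑ j ∈ T, p j) ≤ α2 ∧
          ∀ T' : Finset M, (∑ j ∈ T', p j) ≤ α2 → v2 (r1, b1) T' ≤ v2 (r1, b1) T) →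
        v1 (r1, b1) Tᶜ ≤ v1 (r1, b1) ((Tstar r1 b1)ᶜ))
    -- The chooser's side: given also agent 2's report `(r2, b2)`,
    -- `choose2 r1 b1 r2 b2` is the bundle `A₂` that agent 2 selects: it is affordable
    -- at prices `pstar r1 b1` with budget `α2`, maximizes `v2 (b2, r2)` among such
    -- sets, and equals `Tstar r1 b1` whenever `Tstar r1 b1` attains that maximum.
    -- The mechanism outputs the allocation `(A₁, A₂)` with `A₁ = A₂ᶜ`.
    (choose2 : S1 → S2 → S2 → S1 → Finset M)
    (hchoose : ∀ (r1 : S1) (b1 : S2) (r2 : S2) (b2 : S1),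
      (∑ j ∈ choose2 r1 b1 r2 b2, pstar r1 b1 j) ≤ α2 ∧
      (∀ T : Finset M, (∑ j ∈ T, pstar r1 b1 j) ≤ α2 →
        v2 (b2, r2) T ≤ v2 (b2, r2) (choose2 r1 b1 r2 b2)) ∧
      ((∀ T : Finset M, (∑ j ∈ T, pstar r1 b1 j) ≤ α2 →
          v2 (b2, r2) T ≤ v2 (b2, r2) (Tstar r1 b1)) →
        choose2 r1 b1 r2 b2 = Tstar r1 b1))
    (u1 : S1 → M → ℝ) (u2 : S2 → M → ℝ)
    (hu1 : ∀ σ1 j, 0 ≤ u1 σ1 j) (hu2 : ∀ σ2 j, 0 ≤ u2 σ2 j)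
    (hadd1 : ∀ (σ : S1 × S2) (T : Finset M), v1 σ T = ∑ j ∈ T, u1 σ.1 j)
    (hadd2 : ∀ (σ : S1 × S2) (T : Finset M), v2 σ T = ∑ j ∈ T, u2 σ.2 j)
    (s1 : S1) (s2 : S2) (r1 : S1) (b1 : S2) (r2 : S2) (b2 : S1)
    -- `((r1,b1),(r2,b2))` is a pure Nash equilibrium w.r.t. the true signals `(s1,s2)`
    (hPNE1 : ∀ (r1' : S1) (b1' : S2),
      v1 (s1, r2) ((choose2 r1' b1' r2 b2)ᶜ) ≤ v1 (s1, r2) ((choose2 r1 b1 r2 b2)ᶜ))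
    (hPNE2 : ∀ (r2' : S2) (b2' : S1),
      v2 (r1, s2) (choose2 r1 b1 r2' b2') ≤ v2 (r1, s2) (choose2 r1 b1 r2 b2)) :
    aps α1 (v1 (s1, s2)) ≤ v1 (s1, s2) ((choose2 r1 b1 r2 b2)ᶜ) ∧
    aps α2 (v2 (s1, s2)) ≤ v2 (s1, s2) (choose2 r1 b1 r2 b2) := by
  classical
  obtain ⟨hα1pos, hα1lt⟩ := hα1
  obtain ⟨hα2pos, hα2lt⟩ := hα2
  have hM : Nonempty M := by
    by_contra h
    rw [not_nonempty_iff] at h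
    have h1 := (hpstar r1 b1).2
    rw [Finset.univ_eq_empty, Finset.sum_empty] at h1
    norm_num at h1
  have hv1 : ∀ (σ : S1 × S2), v1 σ = fun T => ∑ j ∈ T, u1 σ.1 j :=
    fun σ => funext (hadd1 σ)
  have hv2 : ∀ (σ : S1 × S2), v2 σ = fun T => ∑ j ∈ T, u2 σ.2 j :=
    fun σ => funext (hadd2 σ)
  constructor
  · -- Agent 1's APS guarantee
    rw [hv1 (s1, s2)]
    simp only
    by_cases htot : (∑ j, u1 s1 j) = 0
    · -- degenerate case: agent 1 values everything at zero
      have hz : ∀ j, u1 s1 j = 0 := fun j =>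
        (Finset.sum_eq_zero_iff_of_nonneg (fun j _ => hu1 s1 j)).1 htot j
          (Finset.mem_univ j)
      have haps0 : aps α1 (fun T => ∑ j ∈ T, u1 s1 j) ≤ 0 := by
        refine aps_le_of_price α1 hα1pos _ (hu1 s1)
          (fun _ => (Fintype.card M : ℝ)⁻¹) (fun _ => by positivity) ?_ 0 ?_
        · rw [Finset.sum_const, Finset.card_univ, nsmul_eq_mul]
          have : (Fintype.card M : ℝ) ≠ 0 := by
            exact_mod_cast Fintype.card_ne_zero
          field_simp
        · intro T _
          simp [Finset.sum_eq_zero (fun j _ => hz j)]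
      exact haps0.trans (Finset.sum_nonneg fun j _ => hu1 s1 j)
    · have htpos : 0 < ∑ j, u1 s1 j :=
        lt_of_le_of_ne (Finset.sum_nonneg fun j _ => hu1 s1 j) (Ne.symm htot)
      set tot := ∑ j, u1 s1 j with htotdef
      set p : M → ℝ := fun j => u1 s1 j / tot with hpdef
      have hpnn : ∀ j, 0 ≤ p j := fun j => div_nonneg (hu1 s1 j) htpos.le
      have hpsum : (∑ j, p j) = 1 := by
        rw [hpdef]
        simp only [← Finset.sum_div, ← htotdef]
        exact div_self htot
      have hsumT : ∀ T : Finset M, (∑ j ∈ T, u1 s1 j) = (∑ j ∈ T, p j) * tot := by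
        intro T
        rw [hpdef]
        simp only [← Finset.sum_div]
        field_simp
      -- Step 1: aps ≤ α1 * tot
      have hapsle : aps α1 (fun T => ∑ j ∈ T, u1 s1 j) ≤ α1 * tot := by
        refine aps_le_of_price α1 hα1pos _ (hu1 s1) p hpnn hpsum _ ?_
        intro T hT
        rw [hsumT T]
        exact mul_le_mul_of_nonneg_right hT htpos.le
      refine hapsle.trans ?_
      -- Step 2: α1 * tot ≤ value of the equilibrium bundle complement
      -- a demand set of u2 r2 at prices p with budget α2
      obtain ⟨Tp, hTpF, hTpmax⟩ :=
        (Finset.univ.filter (fun T : Finset M => (∑ j ∈ T, p j) ≤ α2)).exists_max_image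
          (fun T => ∑ j ∈ T, u2 r2 j)
          ⟨∅, by simp [hα2pos.le]⟩
      have hTpaff : (∑ j ∈ Tp, p j) ≤ α2 := (Finset.mem_filter.1 hTpF).2
      have h1 : v1 (s1, r2) Tpᶜ ≤ v1 (s1, r2) ((Tstar s1 r2)ᶜ) := by
        refine hTmax s1 r2 Tp ⟨p, hpnn, hpsum, hTpaff, ?_⟩
        intro T' hT'
        rw [hadd2, hadd2]
        exact hTpmax T' (Finset.mem_filter.2 ⟨Finset.mem_univ _, hT'⟩)
      have hlow : α1 * tot ≤ v1 (s1, r2) Tpᶜ := by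
        rw [hadd1]
        have hcompl : (∑ j ∈ Tpᶜ, u1 s1 j) = tot - ∑ j ∈ Tp, u1 s1 j := by
          have := Finset.sum_add_sum_compl Tp (u1 s1)
          rw [← htotdef] at this
          linarith
        rw [hcompl, hsumT Tp]
        have : (∑ j ∈ Tp, p j) * tot ≤ α2 * tot :=
          mul_le_mul_of_nonneg_right hTpaff htpos.le
        nlinarith
      have hmatch : choose2 s1 r2 r2 b2 = Tstar s1 r2 := by
        refine (hchoose s1 r2 r2 b2).2.2 ?_
        intro T hT
        have h := hTopt s1 r2 T hT
        rw [hadd2, hadd2] at h ⊢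
        exact h
      have h3 := hPNE1 s1 r2
      rw [hmatch] at h3
      have hfin : α1 * tot ≤ v1 (s1, r2) ((choose2 r1 b1 r2 b2)ᶜ) :=
        le_trans hlow (le_trans h1 h3)
      rw [hadd1] at hfin
      exact hfin
  · -- Agent 2's APS guarantee
    rw [hv2 (s1, s2)]
    simp only
    refine aps_le_of_price α2 hα2pos _ (hu2 s2) (pstar r1 b1) (hpstar r1 b1).1
      (hpstar r1 b1).2 _ ?_
    intro T hT
    have h1 : v2 (b2, s2) T ≤ v2 (b2, s2) (choose2 r1 b1 s2 b2) :=
      (hchoose r1 b1 s2 b2).2.1 T hT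
    have h2 : v2 (r1, s2) (choose2 r1 b1 s2 b2) ≤ v2 (r1, s2) (choose2 r1 b1 r2 b2) :=
      hPNE2 s2 b2
    rw [hadd2, hadd2] at h1 h2
    exact h1.trans h2
end

section
/- There exist a finite set M and a monotone normalized subadditive valuation v : 2^M → ℝ≥0 such that for every subset T ⊆ M, either v(T) < v(M)/2 or v(M∖T) < APS_{1/2}(v); that is, no partition of M gives one part at least the proportional share v(M)/2 and the other part at least the AnyPrice Share for entitlement 1/2. -/
set_option maxRecDepth 40000

def fanoLines : List (Finset (Fin 7)) :=
  [{0,1,2},{0,3,4},{0,5,6},{1,3,5},{1,4,6},{2,3,6},{2,4,5}]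

def HasL (T : Finset (Fin 7)) : Prop := ∃ L ∈ fanoLines, L ⊆ T

instance : DecidablePred HasL := fun T => by unfold HasL; infer_instance

lemma hasL_compl {T : Finset (Fin 7)} (h : ¬ HasL T) : HasL Tᶜ := by
  revert T; decide

lemma not_hasL_compl {T : Finset (Fin 7)} (h : HasL T) : ¬ HasL Tᶜ := by
  revert T; decide

lemma lines_ne_univ : ∀ L ∈ fanoLines, L ≠ Finset.univ := by decide

lemma hasL_univ : HasL Finset.univ := by decide

lemma hasL_mono {T T' : Finset (Fin 7)} (h : HasL T) (hs : T ⊆ T') : HasL T' := by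
  obtain ⟨L, hL, hLT⟩ := h
  exact ⟨L, hL, hLT.trans hs⟩

noncomputable def vv (T : Finset (Fin 7)) : ℝ :=
  if T = Finset.univ then 9
  else if HasL T then 6
  else if T = ∅ then 0
  else 3

lemma vv_univ : vv Finset.univ = 9 := by simp [vv]

lemma vv_empty : vv ∅ = 0 := by
  have h1 : (∅ : Finset (Fin 7)) ≠ Finset.univ := by decide
  have h2 : ¬ HasL (∅ : Finset (Fin 7)) := by decide
  simp [vv, h1, h2]

lemma vv_nonneg (T : Finset (Fin 7)) : 0 ≤ vv T := by
  unfold vv; split_ifs <;> norm_num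

lemma vv_le9 (T : Finset (Fin 7)) : vv T ≤ 9 := by
  unfold vv; split_ifs <;> norm_num

lemma vv_line_ge6 {T : Finset (Fin 7)} (h : HasL T) : 6 ≤ vv T := by
  unfold vv; split_ifs <;> first | norm_num | exact absurd h (by assumption)

lemma vv_noLine_le3 {T : Finset (Fin 7)} (h : ¬ HasL T) : vv T ≤ 3 := by
  have hu : T ≠ Finset.univ := fun he => h (he ▸ hasL_univ)
  unfold vv; rw [if_neg hu, if_neg h]; split_ifs <;> norm_num

lemma vv_nonempty_ge3 {T : Finset (Fin 7)} (h : T ≠ ∅) : 3 ≤ vv T := by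
  unfold vv; split_ifs <;> first | norm_num | exact absurd ‹T = ∅› h

lemma vv_line_eq6 {T : Finset (Fin 7)} (h : HasL T) (hu : T ≠ Finset.univ) : vv T = 6 := by
  simp [vv, h, hu]

lemma vv_mono : ∀ T T' : Finset (Fin 7), T ⊆ T' → vv T ≤ vv T' := by
  intro T T' hs
  by_cases hu : T = Finset.univ
  · have : T' = Finset.univ := Finset.univ_subset_iff.mp (hu ▸ hs)
    rw [hu, this]
  · by_cases hl : HasL T
    · calc vv T = 6 := vv_line_eq6 hl hu
        _ ≤ vv T' := vv_line_ge6 (hasL_mono hl hs)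
    · by_cases he : T = ∅
      · rw [he, vv_empty]; exact vv_nonneg T'
      · calc vv T ≤ 3 := vv_noLine_le3 hl
          _ ≤ vv T' := vv_nonempty_ge3 (fun h => he (Finset.subset_empty.mp (h ▸ hs)))

lemma vv_subadd : ∀ T T' : Finset (Fin 7), vv (T ∪ T') ≤ vv T + vv T' := by
  intro A B
  by_cases hu : A ∪ B = Finset.univ
  · rw [hu, vv_univ]
    by_cases hA : HasL A
    · by_cases hB : B = ∅
      · have : A = Finset.univ := by rwa [hB, Finset.union_empty] at hu
        rw [this, vv_univ, hB, vv_empty]; norm_num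
      · have h1 : 6 ≤ vv A := vv_line_ge6 hA
        have h2 : 3 ≤ vv B := vv_nonempty_ge3 hB
        linarith
    · have hAc : HasL Aᶜ := hasL_compl hA
      have hB : HasL B := by
        refine hasL_mono hAc ?_
        intro x hx
        rcases Finset.mem_union.mp (hu ▸ Finset.mem_univ x : x ∈ A ∪ B) with h | h
        · exact absurd h (Finset.mem_compl.mp hx)
        · exact h
      by_cases hA0 : A = ∅
      · have : B = Finset.univ := by rwa [hA0, Finset.empty_union] at hu
        rw [this, vv_univ, hA0, vv_empty]; norm_num
      · have h1 : 3 ≤ vv A := vv_nonempty_ge3 hA0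
        have h2 : 6 ≤ vv B := vv_line_ge6 hB
        linarith
  · by_cases hl : HasL (A ∪ B)
    · have hv : vv (A ∪ B) = 6 := vv_line_eq6 hl hu
      rw [hv]
      by_cases hA : HasL A
      · have := vv_line_ge6 hA; have := vv_nonneg B; linarith
      · by_cases hB : HasL B
        · have := vv_line_ge6 hB; have := vv_nonneg A; linarith
        · have hA0 : A ≠ ∅ := by
            intro h; rw [h, Finset.empty_union] at hl; exact hB hl
          have hB0 : B ≠ ∅ := by
            intro h; rw [h, Finset.union_empty] at hl; exact hA hl
          have := vv_nonempty_ge3 hA0; have := vv_nonempty_ge3 hB0; linarith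
    · by_cases he : A ∪ B = ∅
      · rw [he, vv_empty]
        have := vv_nonneg A; have := vv_nonneg B; linarith
      · have hv : vv (A ∪ B) ≤ 3 := vv_noLine_le3 hl
        by_cases hA0 : A = ∅
        · have hB0 : B ≠ ∅ := by rw [hA0, Finset.empty_union] at he; exact he
          have := vv_nonempty_ge3 hB0; have := vv_nonneg A; linarith
        · have := vv_nonempty_ge3 hA0; have := vv_nonneg B; linarith

lemma aps_lb : (6 : ℝ) ≤ aps (1/2 : ℝ) vv := by
  unfold aps
  apply le_csInf
  · refine ⟨_, fun _ => (1:ℝ)/7, fun j => by norm_num, ?_, rfl⟩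
    norm_num [Finset.sum_const, Finset.card_univ]
  · rintro x ⟨p, hp0, hp1, rfl⟩
    have hline : ∃ L ∈ fanoLines, (∑ j ∈ L, p j) ≤ 1/2 := by
      by_contra hc
      push_neg at hc
      have e : (∑ j ∈ ({0,1,2} : Finset (Fin 7)), p j) + (∑ j ∈ ({0,3,4} : Finset (Fin 7)), p j)
          + (∑ j ∈ ({0,5,6} : Finset (Fin 7)), p j) + (∑ j ∈ ({1,3,5} : Finset (Fin 7)), p j)
          + (∑ j ∈ ({1,4,6} : Finset (Fin 7)), p j) + (∑ j ∈ ({2,3,6} : Finset (Fin 7)), p j)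
          + (∑ j ∈ ({2,4,5} : Finset (Fin 7)), p j) = 3 * (∑ j, p j) := by
        rw [Fin.sum_univ_seven]
        repeat rw [Finset.sum_insert (by decide)]
        repeat rw [Finset.sum_singleton]
        ring
      have h1 := hc {0,1,2} (by simp [fanoLines])
      have h2 := hc {0,3,4} (by simp [fanoLines])
      have h3 := hc {0,5,6} (by simp [fanoLines])
      have h4 := hc {1,3,5} (by simp [fanoLines])
      have h5 := hc {1,4,6} (by simp [fanoLines])
      have h6 := hc {2,3,6} (by simp [fanoLines])
      have h7 := hc {2,4,5} (by simp [fanoLines])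
      rw [hp1] at e
      linarith
    obtain ⟨L, hL, hLp⟩ := hline
    have hL6 : vv L = 6 := by
      exact vv_line_eq6 ⟨L, hL, subset_rfl⟩ (lines_ne_univ L hL)
    have hmem : (6 : ℝ) ∈ {y : ℝ | ∃ T : Finset (Fin 7), (∑ j ∈ T, p j) ≤ 1/2 ∧ y = vv T} :=
      ⟨L, hLp, hL6.symm⟩
    have hbdd : BddAbove {y : ℝ | ∃ T : Finset (Fin 7), (∑ j ∈ T, p j) ≤ 1/2 ∧ y = vv T} := by
      refine ⟨9, ?_⟩
      rintro y ⟨T, _, rfl⟩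
      exact vv_le9 T
    exact le_csSup hbdd hmem

/-- There exist a finite set `M` (of some size `m`) and a monotone normalized
(nonnegative) subadditive valuation `v : 2^M → ℝ≥0` such that for every `T ⊆ M`,
either `v(T) < v(M)/2` or `v(M∖T) < APS_{1/2}(v)`: no partition of `M` gives one
part at least the proportional share and the other at least the AnyPrice Share
for entitlement `1/2`. -/
theorem exists_subadditive_no_PROP_APS_partition :
    ∃ (m : ℕ) (v : Finset (Fin m) → ℝ),
      (∀ T T' : Finset (Fin m), T ⊆ T' → v T ≤ v T') ∧
      v ∅ = 0 ∧
      (∀ T : Finset (Fin m), 0 ≤ v T) ∧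
      (∀ T T' : Finset (Fin m), v (T ∪ T') ≤ v T + v T') ∧
      ∀ T : Finset (Fin m),
        v T < v (Finset.univ : Finset (Fin m)) / 2 ∨
        v Tᶜ < aps (1 / 2 : ℝ) v := by
  refine ⟨7, vv, vv_mono, vv_empty, vv_nonneg, vv_subadd, ?_⟩
  intro T
  by_cases h : HasL T
  · right
    have h1 : vv Tᶜ ≤ 3 := vv_noLine_le3 (not_hasL_compl h)
    have h2 := aps_lb
    norm_num at h2 ⊢
    linarith
  · left
    have h1 : vv T ≤ 3 := vv_noLine_le3 h
    rw [vv_univ]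
    linarith
end

section
/- Let n ≥ 3, let M be a finite set of goods, let V_i be a set of monotone normalized valuations 2^M → ℝ≥0 for each agent i ∈ {1,…,n}, let X be a predicate on pairs (valuation profile in V₁×…×Vₙ, allocation of M), and let 𝓕 : V₁×…×Vₙ → allocations be a function such that X(v, 𝓕(v)) holds for every profile v. Then for every interdependent-values instance with n agents, nonempty signal sets S₁,…,Sₙ, and valuations v₁,…,vₙ : S × 2^M → ℝ≥0 (S = S₁×…×Sₙ) such that v_i(s,·) ∈ V_i for every i and every s ∈ S, there exists an allocation mechanism 𝓜 (with bid sets B_i = S) such that for every true signal vector s ∈ S there exists a report vector ((r₁,b₁),…,(rₙ,bₙ)) that is a pure Nash equilibrium and whose allocation A = 𝓜((r₁,…,rₙ),(b₁,…,bₙ)) satisfies X((v₁(s,·),…,vₙ(s,·)), A). -/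
/-- Black-box transformation for `n ≥ 3` agents with interdependent values.

An allocation of the finite set `M` of goods to the `n` agents is encoded as a
function `A : M → Fin n` assigning each good to an agent; agent `i`'s bundle is
`{j | A j = i}`.  `V i` is the set of admissible (monotone, normalized, nonnegative)
valuations of agent `i`, `X` is any property of (valuation profile, allocation) pairs,
and `𝓕` is an algorithm returning, for every admissible profile, an allocation
satisfying `X`.  Each agent `i` has a nonempty signal set `S i` and an interdependent
valuation `v i : (∀ i', S i') → Finset M → ℝ` whose set-function lies in `V i` for
every signal vector.  Then there exists an allocation mechanism `𝓜` with bid sets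
`B i = ∀ i', S i'` (each agent reports her own signal together with a guess of the
whole signal vector) such that for every true signal vector `s` there is a report
vector `(r, b)` that is a pure Nash equilibrium and whose allocation satisfies `X`
with respect to the true valuations `fun i => v i s`. -/
theorem blackbox_fair_PNE_mechanism
    {M : Type*} [Fintype M] [DecidableEq M]
    (n : ℕ) (hn : 3 ≤ n)
    (S : Fin n → Type*) (hS : ∀ i, Nonempty (S i))
    (V : Fin n → Set (Finset M → ℝ))
    (hV : ∀ i, ∀ w ∈ V i,
      (∀ T T' : Finset M, T ⊆ T' → w T ≤ w T') ∧ w ∅ = 0 ∧ ∀ T : Finset M, 0 ≤ w T)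
    (X : (Fin n → Finset M → ℝ) → (M → Fin n) → Prop)
    (F : (Fin n → Finset M → ℝ) → (M → Fin n))
    (hF : ∀ w : Fin n → Finset M → ℝ, (∀ i, w i ∈ V i) → X w (F w))
    (v : (i : Fin n) → (∀ i', S i') → Finset M → ℝ)
    (hv : ∀ (i : Fin n) (s : ∀ i', S i'), v i s ∈ V i) :
    ∃ 𝓜 : (∀ i, S i) → ((i : Fin n) → (∀ i', S i')) → (M → Fin n),
      ∀ s : ∀ i, S i,
        ∃ (r : ∀ i, S i) (b : (i : Fin n) → (∀ i', S i')),
          -- `(r, b)` is a pure Nash equilibrium with respect to the true signals `s`: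
          -- agent `i` evaluates bundles with the signal vector `(s i, r₋ᵢ)`.
          (∀ (i : Fin n) (ri' : S i) (bi' : ∀ i', S i'),
            v i (Function.update r i (s i))
                (Finset.univ.filter fun j =>
                  𝓜 (Function.update r i ri') (Function.update b i bi') j = i) ≤
              v i (Function.update r i (s i))
                (Finset.univ.filter fun j => 𝓜 r b j = i)) ∧
          -- and its allocation satisfies property `X` w.r.t. the true signal vector `s`
          X (fun i => v i s) (𝓜 r b) := by

  classical
  set d : ∀ i', S i' := fun i => (hS i).some with hd
  set P : ((i : Fin n) → (∀ i', S i')) → (∀ i', S i') → Prop :=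
    fun b z => n - 1 ≤ (Finset.univ.filter fun i => b i = z).card with hP
  have Puniq : ∀ b z z', P b z → P b z' → z = z' := by
    intro b z z' hz hz'
    by_contra hne
    have hdisj : Disjoint (Finset.univ.filter fun i => b i = z)
        (Finset.univ.filter fun i => b i = z') := by
      rw [Finset.disjoint_left]
      intro i hi hi'
      simp only [Finset.mem_filter] at hi hi'
      exact hne (hi.2 ▸ hi'.2)
    have hcard := Finset.card_union_of_disjoint hdisj
    have hle : ((Finset.univ.filter fun i => b i = z) ∪
        (Finset.univ.filter fun i => b i = z')).card ≤ n := by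
      calc _ ≤ (Finset.univ : Finset (Fin n)).card := Finset.card_le_card (Finset.subset_univ _)
        _ = n := by simp
    rw [hcard] at hle
    have h1 : n - 1 ≤ (Finset.univ.filter fun i => b i = z).card := hz
    have h2 : n - 1 ≤ (Finset.univ.filter fun i => b i = z').card := hz'
    omega
  set maj : ((i : Fin n) → (∀ i', S i')) → (∀ i', S i') :=
    fun b => if h : ∃ z, P b z then h.choose else d with hmaj
  have maj_eq : ∀ b z, P b z → maj b = z := by
    intro b z hz
    have hex : ∃ z', P b z' := ⟨z, hz⟩
    simp only [hmaj]
    rw [dif_pos hex]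
    exact Puniq b _ z hex.choose_spec hz
  refine ⟨fun _ b => F (fun i => v i (maj b)), fun s => ?_⟩
  refine ⟨s, fun _ => s, ?_, ?_⟩
  · intro i ri' bi'
    have h1 : maj (fun _ => s) = s := by
      apply maj_eq
      rw [hP]
      simp only [Finset.filter_true_of_mem (fun _ _ => rfl), Finset.card_univ,
        Fintype.card_fin]
      simp only [Finset.filter_true, Finset.card_univ, Fintype.card_fin]
      omega
    have h2 : maj (Function.update (fun _ => s) i bi') = s := by
      apply maj_eq
      rw [hP]
      have hsub : Finset.univ.erase i ⊆
          Finset.univ.filter fun j => Function.update (fun _ => s) i bi' j = s := by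
        intro j hj
        rw [Finset.mem_erase] at hj
        simp [Function.update_of_ne hj.1]
      calc n - 1 = (Finset.univ.erase i).card := by
            rw [Finset.card_erase_of_mem (Finset.mem_univ i)]; simp
        _ ≤ _ := Finset.card_le_card hsub
    simp only [h1, h2]
    exact le_rfl
  · have h1 : maj (fun _ => s) = s := by
      apply maj_eq
      rw [hP]
      simp only [Finset.filter_true_of_mem (fun _ _ => rfl), Finset.card_univ,
        Fintype.card_fin]
      simp only [Finset.filter_true, Finset.card_univ, Fintype.card_fin]
      omega
    simp only [h1]
    exact hF _ (fun i => hv i s)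
end

section
/- Fix n ≥ 2 and a finite set M of n² goods. Consider the interdependent-values instance with n agents and equal entitlements in which S₁ = {0,1}^M, S_i is a singleton for every i ≥ 2, and for every agent i ∈ {1,…,n}, signal vector s, and T ⊆ M, v_i(s,T) = Σ_{j∈T} s_{1,j} (where s_{1,j} ∈ {0,1} is the j-th coordinate of agent 1's signal). Then there is no choice of bid sets B₁,…,Bₙ and allocation mechanism 𝓜 : S × B → allocations satisfying both: (i) for every s ∈ S there exists a pure Nash equilibrium; and (ii) for every s ∈ S, every pure Nash equilibrium induces an allocation (A₁,…,Aₙ) with v_i(s,A_i) ≥ MMS_i(s) for all i, where MMS_i(s) = max over allocations (P₁,…,Pₙ) of min_{i'} v_i(s,P_{i'}). -/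
/-- The common additive dichotomous valuation: given agent 1's signal `σ : M → Bool`,
every agent values a bundle `T` at `Σ_{j ∈ T} σ j` (each good is worth `0` or `1`,
according to agent 1's signal only). -/
noncomputable def sval {M : Type*} [Fintype M] (σ : M → Bool) (T : Finset M) : ℝ :=
  ∑ j ∈ T, if σ j then (1 : ℝ) else 0


lemma sval_eq_card {M : Type*} [Fintype M] (σ : M → Bool) (T : Finset M) :
    sval σ T = ((T.filter (fun j => σ j = true)).card : ℝ) := by
  unfold sval
  rw [Finset.sum_boole]

/-- The bundle of agent `i` in the allocation `A : M → Fin n`. -/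
def bundle {M : Type*} [Fintype M] [DecidableEq M] {n : ℕ}
    (A : M → Fin n) (i : Fin n) : Finset M :=
  Finset.univ.filter fun j => A j = i

/-- Pure Nash equilibrium for a mechanism in the instance where agent `i0` (= agent 1)
has signal set `{0,1}^M` and every other agent's signal set is a singleton (so a
report consists of agent 1's reported signal `r1 : M → Bool` together with the bids
`b i : B i` of all agents).  All agents value bundles by `sval` applied to agent 1's
signal; hence agent `i0`'s perceived signal vector uses her true signal `s1`, while
every other agent's perceived signal vector uses agent 1's report `r1`. -/
def IsPNE {M : Type*} [Fintype M] [DecidableEq M] {n : ℕ} (B : Fin n → Type*)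
    (𝓜 : (M → Bool) → (∀ i, B i) → (M → Fin n)) (i0 : Fin n)
    (s1 r1 : M → Bool) (b : ∀ i, B i) : Prop :=
  (∀ (r1' : M → Bool) (b1' : B i0),
      sval s1 (bundle (𝓜 r1' (Function.update b i0 b1')) i0) ≤
        sval s1 (bundle (𝓜 r1 b) i0)) ∧
  ∀ i : Fin n, i ≠ i0 → ∀ bi' : B i,
      sval r1 (bundle (𝓜 r1 (Function.update b i bi')) i) ≤
        sval r1 (bundle (𝓜 r1 b) i)

/-- Impossibility of MMS for all equilibria: for `n ≥ 2` agents with equal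
entitlements and a set `M` of `n²` goods, in the interdependent instance where
`S₁ = {0,1}^M`, the other signal sets are singletons, and
`v_i(s,T) = Σ_{j∈T} s_{1,j}` for every agent `i`, there is no choice of bid sets
`B₁,…,Bₙ` and allocation mechanism `𝓜` such that (i) every true signal admits a
pure Nash equilibrium, and (ii) every pure Nash equilibrium gives every agent at
least her maximin share with respect to the true signal. -/
theorem no_all_PNE_MMS_mechanism
    {M : Type*} [Fintype M] [DecidableEq M] (n : ℕ) (hn : 2 ≤ n)
    (hcard : Fintype.card M = n ^ 2) :
    ¬ ∃ (B : Fin n → Type) (𝓜 : (M → Bool) → (∀ i, B i) → (M → Fin n)),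
        (∀ s1 : M → Bool, ∃ (r1 : M → Bool) (b : ∀ i, B i),
          IsPNE B 𝓜 ⟨0, by omega⟩ s1 r1 b) ∧
        (∀ (s1 r1 : M → Bool) (b : ∀ i, B i),
          IsPNE B 𝓜 ⟨0, by omega⟩ s1 r1 b →
            ∀ i : Fin n,
              (Finset.univ : Finset (M → Fin n)).sup'
                  ⟨fun _ => ⟨0, by omega⟩, Finset.mem_univ _⟩
                  (fun A => (Finset.univ : Finset (Fin n)).inf'
                    ⟨⟨0, by omega⟩, Finset.mem_univ _⟩
                    fun i' => sval s1 (bundle A i')) ≤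
                sval s1 (bundle (𝓜 r1 b) i)) := by
  rintro ⟨B, 𝓜, hex, hmms⟩
  have hi0 : (0:ℕ) < n := by omega
  obtain ⟨r1, b, hpne⟩ := hex (fun _ => true)
  set i0 : Fin n := ⟨0, hi0⟩ with hi0def
  set A : M → Fin n := 𝓜 r1 b with hAdef
  -- an equiv to the product, to build a balanced allocation
  have e : M ≃ Fin n × Fin n := Fintype.equivOfCardEq (by simp [hcard]; ring)
  -- Step 1: MMS for the all-true signal is at least n, so agent 0's bundle has ≥ n goods
  have hbal : ∀ i' : Fin n, (bundle (fun j => (e j).1) i').card = n := by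
    intro i'
    have h1 : (bundle (fun j => (e j).1) i').card
        = Fintype.card {j : M // (e j).1 = i'} := by
      rw [Fintype.card_subtype]; rfl
    have h2 : {j : M // (e j).1 = i'} ≃ Fin n :=
      { toFun := fun p => (e p.1).2
        invFun := fun x => ⟨e.symm (i', x), by simp⟩
        left_inv := by
          rintro ⟨j, hj⟩
          ext
          · simp only
            have : ((i' : Fin n), (e j).2) = e j := by
              rw [← hj]
            rw [this, Equiv.symm_apply_apply]
        right_inv := fun x => by simp }
    rw [h1, Fintype.card_congr h2, Fintype.card_fin]
  have hsval_true : ∀ T : Finset M, sval (fun _ => true) T = (T.card : ℝ) := by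
    intro T
    rw [sval_eq_card]
    simp
  have hbig : n ≤ (bundle A i0).card := by
    have h := hmms (fun _ => true) r1 b hpne i0
    have hlow : (n : ℝ) ≤
        (Finset.univ : Finset (M → Fin n)).sup'
          ⟨fun _ => ⟨0, by omega⟩, Finset.mem_univ _⟩
          (fun A => (Finset.univ : Finset (Fin n)).inf'
            ⟨⟨0, by omega⟩, Finset.mem_univ _⟩
            fun i' => sval (fun _ => true) (bundle A i')) := by
      refine le_trans ?_ (Finset.le_sup' _ (Finset.mem_univ (fun j => (e j).1)))
      apply Finset.le_inf'
      intro i' _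
      rw [hsval_true, hbal]
    have := le_trans hlow h
    rw [hsval_true] at this
    exact_mod_cast this
  -- Step 2: choose n distinct goods in agent 0's bundle
  have hcard2 : n ≤ Fintype.card {j : M // j ∈ bundle A i0} := by
    rw [Fintype.card_coe]; exact hbig
  obtain ⟨g⟩ := Function.Embedding.nonempty_of_card_le
    (by simpa using hcard2 : Fintype.card (Fin n) ≤ Fintype.card {j : M // j ∈ bundle A i0})
  set f : Fin n → M := fun i => (g i).1 with hfdef
  have hf_mem : ∀ i, f i ∈ bundle A i0 := fun i => (g i).2
  have hf_inj : Function.Injective f := fun a b h => g.injective (Subtype.ext h)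
  -- the allocation giving each agent one chosen good
  set A2 : M → Fin n := fun j => if h : ∃ i, f i = j then h.choose else i0 with hA2def
  have hA2 : ∀ i, f i ∈ bundle A2 i := by
    intro i
    have h : ∃ i', f i' = f i := ⟨i, rfl⟩
    have : A2 (f i) = i := by
      rw [hA2def]
      simp only [dif_pos h]
      exact hf_inj h.choose_spec
    simp [bundle, this]
  -- Step 3: the new signal
  set s1' : M → Bool := fun j => decide (A j = i0) with hs1'def
  have hs1' : ∀ j, s1' j = true ↔ A j = i0 := by
    intro j; simp [hs1'def]
  -- (r1, b) is still a PNE for s1'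
  have hub : ∀ T : Finset M, sval s1' T ≤ ((bundle A i0).card : ℝ) := by
    intro T
    rw [sval_eq_card]
    have : T.filter (fun j => s1' j = true) ⊆ bundle A i0 := by
      intro j hj
      rw [Finset.mem_filter] at hj
      simp [bundle, (hs1' j).1 hj.2]
    exact_mod_cast Finset.card_le_card this
  have heq0 : sval s1' (bundle A i0) = ((bundle A i0).card : ℝ) := by
    rw [sval_eq_card]
    congr 2
    apply Finset.filter_true_of_mem
    intro j hj
    rw [hs1']
    simpa [bundle] using hj
  have hpne' : IsPNE B 𝓜 i0 s1' r1 b := by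
    constructor
    · intro r1' b1'
      rw [← hAdef, heq0]
      exact hub _
    · exact hpne.2
  -- Step 4: contradiction with agent 1
  set i1 : Fin n := ⟨1, by omega⟩ with hi1def
  have hne : i1 ≠ i0 := by
    intro h
    have := congrArg Fin.val h
    simp [hi1def, hi0def] at this
  have h := hmms s1' r1 b hpne' i1
  have hlow : (1 : ℝ) ≤
      (Finset.univ : Finset (M → Fin n)).sup'
        ⟨fun _ => ⟨0, by omega⟩, Finset.mem_univ _⟩
        (fun A => (Finset.univ : Finset (Fin n)).inf'
          ⟨⟨0, by omega⟩, Finset.mem_univ _⟩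
          fun i' => sval s1' (bundle A i')) := by
    refine le_trans ?_ (Finset.le_sup' _ (Finset.mem_univ A2))
    apply Finset.le_inf'
    intro i' _
    rw [sval_eq_card]
    have hmem : f i' ∈ (bundle A2 i').filter (fun j => s1' j = true) := by
      rw [Finset.mem_filter]
      refine ⟨hA2 i', (hs1' _).2 ?_⟩
      have := hf_mem i'
      simpa [bundle] using this
    have : 1 ≤ ((bundle A2 i').filter (fun j => s1' j = true)).card :=
      Finset.card_pos.mpr ⟨f i', hmem⟩
    exact_mod_cast this
  have hzero : sval s1' (bundle A i1) = 0 := by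
    rw [sval_eq_card]
    have : (bundle A i1).filter (fun j => s1' j = true) = ∅ := by
      apply Finset.eq_empty_of_forall_notMem
      intro j hj
      rw [Finset.mem_filter] at hj
      have h1 : A j = i1 := by simpa [bundle] using hj.1
      have h2 : A j = i0 := (hs1' j).1 hj.2
      exact hne (h1 ▸ h2)
    rw [this]
    simp
  rw [← hAdef, hzero] at h
  linarith [le_trans hlow h]
end
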